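/- arXiv:2106.05151 — 14 statements merged into one kernel-verified Lean document; each statement's English description precedes it below -/
import Mathlib

section
/- (Rank obstruction to cooling: necessity of diverging energy.) Let ρ_S and ρ_M be density matrices on ℂ^{d_S} and ℂ^{d_M}, let U be a unitary on ℂ^{d_S} ⊗ ℂ^{d_M}, and set σ' := U (ρ_S ⊗ ρ_M) U†, ρ'_S := Tr_M σ', ρ'_M := Tr_S σ'. Then rank(ρ'_S) · rank(ρ'_M) ≥ rank(ρ_S) · rank(ρ_M). In particular, if rank(ρ'_S) < rank(ρ_S), then rank(ρ'_M) > rank(ρ_M), so the support of ρ'_M is not contained in the support of ρ_M. -/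
open scoped Kronecker ComplexOrder
open Matrix

/-- Partial trace over the second (right) tensor factor. -/
noncomputable def ptrR {α β : Type*} [Fintype β] (σ : Matrix (α × β) (α × β) ℂ) :
    Matrix α α ℂ :=
  Matrix.of fun i i' => ∑ k, σ (i, k) (i', k)

/-- Partial trace over the first (left) tensor factor. -/
noncomputable def ptrL {α β : Type*} [Fintype α] (σ : Matrix (α × β) (α × β) ℂ) :
    Matrix β β ℂ :=
  Matrix.of fun j j' => ∑ k, σ (k, j) (k, j')

/-! Conjugation by a product unitary `V ⊗ₖ W` preserves the rank of σ and the ranks of its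
marginals, and for eigenbases `V`, `W` of the marginals it makes both marginals diagonal. In that
basis a positive semidefinite σ has rank at most the number of its nonzero diagonal entries, and
`σ (i, k) (i, k) ≠ 0` forces the marginal entries at `i` and at `k` to be nonzero; hence
`rank σ ≤ rank (ptrR σ) * rank (ptrL σ)`. For `σ = U (ρS ⊗ ρM) Uᴴ`, of rank
`rank ρS * rank ρM`, this is the inequality, and the rest follows since `rank ρM > 0`. -/

namespace Matrix

section CommRing

variable {R n : Type*} [CommRing R] [StarRing R] [Fintype n] [DecidableEq n]

lemma rank_mul_mul_conjTranspose_of_mem_unitaryGroup {U : Matrix n n R}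
    (hU : U ∈ unitaryGroup n R) (X : Matrix n n R) : (U * X * Uᴴ).rank = X.rank := by
  rw [← star_eq_conjTranspose,
    rank_mul_eq_left_of_isUnit_det _ _ (UnitaryGroup.det_isUnit ⟨_, Unitary.star_mem hU⟩),
    rank_mul_eq_right_of_isUnit_det _ _ (UnitaryGroup.det_isUnit ⟨U, hU⟩)]

lemma rank_conjTranspose_mul_mul_of_mem_unitaryGroup {U : Matrix n n R}
    (hU : U ∈ unitaryGroup n R) (X : Matrix n n R) : (Uᴴ * X * U).rank = X.rank := by
  simpa only [star_eq_conjTranspose, conjTranspose_conjTranspose] using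
    rank_mul_mul_conjTranspose_of_mem_unitaryGroup (Unitary.star_mem hU) X

end CommRing

lemma rank_pos_of_trace_ne_zero {K n : Type*} [Field K] [Fintype n] {A : Matrix n n K}
    (h : A.trace ≠ 0) : 0 < A.rank := by
  classical
  refine Nat.pos_of_ne_zero fun h0 => h ?_
  rw [rank, Submodule.finrank_eq_zero, LinearMap.range_eq_bot] at h0
  have hA : A = 0 := by
    ext i j
    simpa using congrFun (LinearMap.congr_fun h0 (Pi.single j 1)) i
  rw [hA, trace_zero]

variable {𝕜 m n : Type*} [RCLike 𝕜] [Fintype m] [Fintype n] [DecidableEq m] [DecidableEq n]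

lemma rank_diagonal_eq_card_diag_ne_zero (d : n → 𝕜) :
    (diagonal d).rank = Fintype.card {i // diagonal d i i ≠ 0} := by
  classical
  simp only [rank_diagonal, diagonal_apply_eq]

lemma IsHermitian.rank_kronecker {A : Matrix m m 𝕜} {B : Matrix n n 𝕜} (hA : A.IsHermitian)
    (hB : B.IsHermitian) : (A ⊗ₖ B).rank = A.rank * B.rank := by
  classical
  have hAB : A ⊗ₖ B = ((hA.eigenvectorUnitary : Matrix m m 𝕜) ⊗ₖ hB.eigenvectorUnitary) *
      (diagonal fun p => (hA.eigenvalues p.1 : 𝕜) * hB.eigenvalues p.2) *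
      ((hA.eigenvectorUnitary : Matrix m m 𝕜) ⊗ₖ hB.eigenvectorUnitary)ᴴ := by
    conv_lhs => rw [hA.spectral_theorem, hB.spectral_theorem]
    simp only [Unitary.conjStarAlgAut_apply, star_eq_conjTranspose, conjTranspose_kronecker,
      mul_kronecker_mul, diagonal_kronecker_diagonal, Function.comp_def]
  rw [hAB, rank_mul_mul_conjTranspose_of_mem_unitaryGroup
      (kronecker_mem_unitary hA.eigenvectorUnitary.2 hB.eigenvectorUnitary.2),
    rank_diagonal, hA.rank_eq_card_non_zero_eigs, hB.rank_eq_card_non_zero_eigs,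
    ← Fintype.card_prod]
  refine Fintype.card_congr
    ((Equiv.subtypeEquivRight fun p => ?_).trans Equiv.subtypeProdEquivProd)
  simp

lemma PosSemidef.apply_eq_zero_of_diag_eq_zero {A : Matrix n n 𝕜} (hA : A.PosSemidef) {p : n}
    (hp : A p p = 0) (q : n) : A q p = 0 := by
  have hcol : A *ᵥ Pi.single p 1 = 0 :=
    (hA.dotProduct_mulVec_zero_iff _).mp (by simp [mulVec_single, hp])
  simpa [mulVec_single] using congrFun hcol q

lemma PosSemidef.rank_le_card_diag_ne_zero {A : Matrix n n 𝕜} (hA : A.PosSemidef) :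
    A.rank ≤ Fintype.card {p // A p p ≠ 0} := by
  classical
  set P : Matrix n n 𝕜 := diagonal fun p => if A p p = 0 then 0 else 1
  have hAP : A = P * A * P := by
    ext p q
    rw [mul_diagonal, diagonal_mul]
    by_cases hp : A p p = 0
    · simp [hp, ← hA.1.apply p q, hA.apply_eq_zero_of_diag_eq_zero hp]
    by_cases hq : A q q = 0
    · simp [hq, hA.apply_eq_zero_of_diag_eq_zero hq]
    simp [hp, hq]
  calc A.rank = (P * (A * P)).rank := by rw [← mul_assoc, ← hAP]
    _ ≤ P.rank := rank_mul_le_left _ _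
    _ = Fintype.card {p // A p p ≠ 0} := by simp [P, rank_diagonal]

end Matrix

section PartialTrace

variable {α β : Type*} {σ : Matrix (α × β) (α × β) ℂ}

lemma ptrL_eq_ptrR_submatrix_swap [Fintype α] (σ : Matrix (α × β) (α × β) ℂ) :
    ptrL σ = ptrR (σ.submatrix Prod.swap Prod.swap) :=
  rfl

lemma isHermitian_ptrR [Fintype β] (hσ : σ.IsHermitian) : (ptrR σ).IsHermitian := by
  ext i i'
  simp only [conjTranspose_apply, ptrR, of_apply, star_sum]
  exact Finset.sum_congr rfl fun k _ => hσ.apply _ _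

lemma isHermitian_ptrL [Fintype α] (hσ : σ.IsHermitian) : (ptrL σ).IsHermitian :=
  isHermitian_ptrR (hσ.submatrix Prod.swap)

lemma Matrix.PosSemidef.ptrR_apply_self_ne_zero [Fintype β] (hσ : σ.PosSemidef) {p : α × β}
    (hp : σ p p ≠ 0) : ptrR σ p.1 p.1 ≠ 0 := by
  intro h
  rw [ptrR, of_apply, Finset.sum_eq_zero_iff_of_nonneg fun k _ => hσ.diag_nonneg] at h
  exact hp (h p.2 (Finset.mem_univ _))

lemma Matrix.PosSemidef.ptrL_apply_self_ne_zero [Fintype α] (hσ : σ.PosSemidef) {p : α × β}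
    (hp : σ p p ≠ 0) : ptrL σ p.2 p.2 ≠ 0 :=
  (hσ.submatrix Prod.swap).ptrR_apply_self_ne_zero (p := p.swap) hp

lemma Matrix.PosSemidef.rank_le_card_mul_card [Fintype α] [Fintype β] (hσ : σ.PosSemidef) :
    σ.rank ≤ Fintype.card {i // ptrR σ i i ≠ 0} * Fintype.card {k // ptrL σ k k ≠ 0} := by
  classical
  rw [← Fintype.card_prod]
  refine hσ.rank_le_card_diag_ne_zero.trans (Fintype.card_le_of_injective
    (fun p => (⟨p.1.1, hσ.ptrR_apply_self_ne_zero p.2⟩, ⟨p.1.2, hσ.ptrL_apply_self_ne_zero p.2⟩))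
    fun p q hpq => ?_)
  simp only [Prod.mk.injEq, Subtype.mk.injEq] at hpq
  exact Subtype.ext (Prod.ext hpq.1 hpq.2)

lemma ptrR_kronecker_one_mul [Fintype α] [Fintype β] [DecidableEq β] (A : Matrix α α ℂ)
    (σ : Matrix (α × β) (α × β) ℂ) : ptrR ((A ⊗ₖ (1 : Matrix β β ℂ)) * σ) = A * ptrR σ := by
  ext i i'
  simp only [ptrR, mul_apply, kroneckerMap_apply, one_apply, mul_ite, mul_one, mul_zero, ite_mul,
    zero_mul, Fintype.sum_prod_type, Finset.sum_ite_eq, Finset.mem_univ, ↓reduceIte, of_apply,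
    Finset.mul_sum]
  exact Finset.sum_comm

lemma ptrR_mul_kronecker_one [Fintype α] [Fintype β] [DecidableEq β] (A : Matrix α α ℂ)
    (σ : Matrix (α × β) (α × β) ℂ) : ptrR (σ * (A ⊗ₖ (1 : Matrix β β ℂ))) = ptrR σ * A := by
  ext i i'
  simp only [ptrR, mul_apply, kroneckerMap_apply, one_apply, mul_ite, mul_one, mul_zero,
    Fintype.sum_prod_type, Finset.sum_ite_eq', Finset.mem_univ, ↓reduceIte, of_apply,
    Finset.sum_mul]
  exact Finset.sum_comm

lemma ptrR_one_kronecker_mul [Fintype α] [Fintype β] [DecidableEq α] (C : Matrix β β ℂ)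
    (σ : Matrix (α × β) (α × β) ℂ) :
    ptrR (((1 : Matrix α α ℂ) ⊗ₖ C) * σ) = ptrR (σ * ((1 : Matrix α α ℂ) ⊗ₖ C)) := by
  ext i i'
  simp only [ptrR, mul_apply, kroneckerMap_apply, one_apply, ite_mul, one_mul, zero_mul,
    Fintype.sum_prod_type, Finset.sum_ite_irrel, Finset.sum_const_zero, Finset.sum_ite_eq,
    Finset.mem_univ, ↓reduceIte, of_apply, mul_ite, mul_zero, Finset.sum_ite_eq']
  rw [Finset.sum_comm]
  exact Finset.sum_congr rfl fun _ _ => Finset.sum_congr rfl fun _ _ => mul_comm _ _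

variable [Fintype α] [Fintype β] [DecidableEq α] [DecidableEq β]

lemma ptrR_conjTranspose_kronecker_mul_mul (V : Matrix α α ℂ) {W : Matrix β β ℂ}
    (hW : W ∈ unitaryGroup β ℂ) (σ : Matrix (α × β) (α × β) ℂ) :
    ptrR ((V ⊗ₖ W)ᴴ * σ * (V ⊗ₖ W)) = Vᴴ * ptrR σ * V := by
  have hinner : ptrR (((1 : Matrix α α ℂ) ⊗ₖ Wᴴ) * σ * (1 ⊗ₖ W)) = ptrR σ := by
    rw [mul_assoc, ptrR_one_kronecker_mul, mul_assoc, ← mul_kronecker_mul, mul_one,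
      ← star_eq_conjTranspose, Unitary.mul_star_self_of_mem hW, one_kronecker_one, mul_one]
  have hleft : Vᴴ ⊗ₖ Wᴴ = (Vᴴ ⊗ₖ (1 : Matrix β β ℂ)) * (1 ⊗ₖ Wᴴ) := by
    simp [← mul_kronecker_mul]
  have hright : V ⊗ₖ W = ((1 : Matrix α α ℂ) ⊗ₖ W) * (V ⊗ₖ 1) := by
    simp [← mul_kronecker_mul]
  have hassoc : ∀ a b c d e : Matrix (α × β) (α × β) ℂ,
      a * b * c * (d * e) = a * (b * c * d) * e := fun _ _ _ _ _ => by simp only [mul_assoc]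
  rw [conjTranspose_kronecker, hleft, hright, hassoc, ptrR_mul_kronecker_one,
    ptrR_kronecker_one_mul, hinner]

lemma ptrL_conjTranspose_kronecker_mul_mul {V : Matrix α α ℂ} (hV : V ∈ unitaryGroup α ℂ)
    (W : Matrix β β ℂ) (σ : Matrix (α × β) (α × β) ℂ) :
    ptrL ((V ⊗ₖ W)ᴴ * σ * (V ⊗ₖ W)) = Wᴴ * ptrL σ * W := by
  have hswap : (V ⊗ₖ W).submatrix Prod.swap Prod.swap = W ⊗ₖ V := by
    ext; simp [mul_comm]
  rw [ptrL_eq_ptrR_submatrix_swap, ptrL_eq_ptrR_submatrix_swap,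
    ← ptrR_conjTranspose_kronecker_mul_mul W hV, ← hswap, conjTranspose_submatrix,
    submatrix_mul _ _ _ _ _ Prod.swap_bijective, submatrix_mul _ _ _ _ _ Prod.swap_bijective]

theorem Matrix.PosSemidef.rank_le_rank_ptrR_mul_rank_ptrL (hσ : σ.PosSemidef) :
    σ.rank ≤ (ptrR σ).rank * (ptrL σ).rank := by
  have hA := isHermitian_ptrR hσ.1
  have hB := isHermitian_ptrL hσ.1
  set V := hA.eigenvectorUnitary
  set W := hB.eigenvectorUnitary
  set τ := ((V : Matrix α α ℂ) ⊗ₖ (W : Matrix β β ℂ))ᴴ * σ * (V ⊗ₖ W)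
  have hτR : ptrR τ = diagonal (RCLike.ofReal ∘ hA.eigenvalues) := by
    have h := hA.conjStarAlgAut_star_eigenvectorUnitary
    rwa [Unitary.conjStarAlgAut_star_apply, star_eq_conjTranspose,
      ← ptrR_conjTranspose_kronecker_mul_mul _ W.2 σ] at h
  have hτL : ptrL τ = diagonal (RCLike.ofReal ∘ hB.eigenvalues) := by
    have h := hB.conjStarAlgAut_star_eigenvectorUnitary
    rwa [Unitary.conjStarAlgAut_star_apply, star_eq_conjTranspose,
      ← ptrL_conjTranspose_kronecker_mul_mul V.2 _ σ] at h
  calc σ.rank = τ.rank :=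
        (rank_conjTranspose_mul_mul_of_mem_unitaryGroup (kronecker_mem_unitary V.2 W.2) σ).symm
    _ ≤ Fintype.card {i // ptrR τ i i ≠ 0} * Fintype.card {k // ptrL τ k k ≠ 0} :=
        (hσ.conjTranspose_mul_mul_same _).rank_le_card_mul_card
    _ = (ptrR τ).rank * (ptrL τ).rank := by
        rw [hτR, hτL, rank_diagonal_eq_card_diag_ne_zero, rank_diagonal_eq_card_diag_ne_zero]
    _ = (ptrR σ).rank * (ptrL σ).rank := by
        rw [ptrR_conjTranspose_kronecker_mul_mul _ W.2, ptrL_conjTranspose_kronecker_mul_mul V.2,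
          rank_conjTranspose_mul_mul_of_mem_unitaryGroup V.2,
          rank_conjTranspose_mul_mul_of_mem_unitaryGroup W.2]

end PartialTrace

theorem rank_obstruction_to_cooling_general (dS dM : ℕ)
    (ρS : Matrix (Fin dS) (Fin dS) ℂ) (hρS : ρS.PosSemidef)
    (ρM : Matrix (Fin dM) (Fin dM) ℂ) (hρM : ρM.PosSemidef) (hρMtr : ρM.trace = 1)
    (U : Matrix (Fin dS × Fin dM) (Fin dS × Fin dM) ℂ)
    (hU : U ∈ Matrix.unitaryGroup (Fin dS × Fin dM) ℂ) :
    ρS.rank * ρM.rank ≤ (ptrR (U * (ρS ⊗ₖ ρM) * Uᴴ)).rank * (ptrL (U * (ρS ⊗ₖ ρM) * Uᴴ)).rank ∧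
    ((ptrR (U * (ρS ⊗ₖ ρM) * Uᴴ)).rank < ρS.rank →
      ρM.rank < (ptrL (U * (ρS ⊗ₖ ρM) * Uᴴ)).rank ∧
      ¬ LinearMap.range (ptrL (U * (ρS ⊗ₖ ρM) * Uᴴ)).mulVecLin ≤ LinearMap.range ρM.mulVecLin) := by
  set σ' := U * (ρS ⊗ₖ ρM) * Uᴴ
  have hrank : ρS.rank * ρM.rank ≤ (ptrR σ').rank * (ptrL σ').rank :=
    calc ρS.rank * ρM.rank = σ'.rank := by
          rw [rank_mul_mul_conjTranspose_of_mem_unitaryGroup hU, hρS.1.rank_kronecker hρM.1]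
      _ ≤ (ptrR σ').rank * (ptrL σ').rank :=
          ((hρS.kronecker hρM).mul_mul_conjTranspose_same U).rank_le_rank_ptrR_mul_rank_ptrL
  refine ⟨hrank, fun hS => ?_⟩
  have hM_pos : 0 < ρM.rank := rank_pos_of_trace_ne_zero (hρMtr ▸ one_ne_zero)
  have hM : ρM.rank < (ptrL σ').rank := by
    by_contra! hle
    exact (Nat.mul_lt_mul_of_lt_of_le hS hle hM_pos).not_ge hrank
  exact ⟨hM, fun hsupp => hM.not_ge (Submodule.finrank_mono hsupp)⟩

/-- Rank obstruction to cooling: necessity of diverging energy: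
the product of the ranks of the marginals cannot decrease under a global unitary applied to a
product state; in particular a rank decrease of the system forces a rank increase of the
machine, so the support of the final machine state is not contained in the support of the
initial one. -/
theorem rank_obstruction_to_cooling (dS dM : ℕ)
    (ρS : Matrix (Fin dS) (Fin dS) ℂ) (hρS : ρS.PosSemidef) (hρStr : ρS.trace = 1)
    (ρM : Matrix (Fin dM) (Fin dM) ℂ) (hρM : ρM.PosSemidef) (hρMtr : ρM.trace = 1)
    (U : Matrix (Fin dS × Fin dM) (Fin dS × Fin dM) ℂ)
    (hU : U ∈ Matrix.unitaryGroup (Fin dS × Fin dM) ℂ) :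
    ρS.rank * ρM.rank ≤ (ptrR (U * (ρS ⊗ₖ ρM) * Uᴴ)).rank * (ptrL (U * (ρS ⊗ₖ ρM) * Uᴴ)).rank ∧
    ((ptrR (U * (ρS ⊗ₖ ρM) * Uᴴ)).rank < ρS.rank →
      ρM.rank < (ptrL (U * (ρS ⊗ₖ ρM) * Uᴴ)).rank ∧
      ¬ LinearMap.range (ptrL (U * (ρS ⊗ₖ ρM) * Uᴴ)).mulVecLin ≤ LinearMap.range ρM.mulVecLin) :=
  rank_obstruction_to_cooling_general dS dM ρS hρS ρM hρM hρMtr U hU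
end

section
/- (Diverging-time protocol saturates the Landauer limit, Theorem 2.) Let d ≥ 1, ω : Fin d → ℝ, β > 0, and x_max ≥ 1. For x ∈ ℝ define Z(x) := ∑_k exp(−β x ω_k), p_k(x) := exp(−β x ω_k)/Z(x), and the Shannon entropy S(x) := −∑_k p_k(x) log p_k(x). For each integer N ≥ 1 set ε_N := (x_max − 1)/N, x_n := 1 + n ε_N for 0 ≤ n ≤ N, and define the total heat dissipated by the machines Q_N := ∑_{n=1}^{N} ∑_{k} x_n ω_k (p_k(x_{n−1}) − p_k(x_n)). Then lim_{N→∞} Q_N = (1/β)(S(1) − S(x_max)). -/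
/-! With the mean energy `E(x) = ∑ₖ ωₖ pₖ(x)` the heat is
`Q_N = ∑ₙ xₙ (E(xₙ₋₁) − E(xₙ))`. Summation by parts turns it into
`E(1) − x_max E(x_max) + ∑_{n<N} ε_N E(xₙ)`, and the last term is a left Riemann sum of the
continuous function `E`, so it tends to `∫₁^{x_max} E`. Since `(log Z)' = −β E` and
`S(x) = β x E(x) + log Z(x)`, the limit is `(S(1) − S(x_max))/β`. -/

open Filter

/-- Partition function `Z(x) = ∑ₖ exp(−β x ωₖ)`. -/
noncomputable def Zfun (d : ℕ) (ω : Fin d → ℝ) (β x : ℝ) : ℝ :=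
  ∑ k, Real.exp (-β * x * ω k)

/-- Gibbs populations `p_k(x) = exp(−β x ωₖ)/Z(x)`. -/
noncomputable def pfun (d : ℕ) (ω : Fin d → ℝ) (β x : ℝ) (k : Fin d) : ℝ :=
  Real.exp (-β * x * ω k) / Zfun d ω β x

/-- Shannon entropy `S(x) = −∑ₖ p_k(x) log p_k(x)`. -/
noncomputable def Sfun (d : ℕ) (ω : Fin d → ℝ) (β x : ℝ) : ℝ :=
  -∑ k, pfun d ω β x k * Real.log (pfun d ω β x k)

open Topology Finset

section RiemannSum

variable {E : Type*} [NormedAddCommGroup E] [NormedSpace ℝ E] [CompleteSpace E]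

noncomputable def leftRiemannSum (f : ℝ → E) (a b : ℝ) (N : ℕ) : E :=
  ∑ i ∈ range N, ((b - a) / N) • f (a + i * ((b - a) / N))

lemma norm_smul_sub_intervalIntegral_le {f : ℝ → E} {u v η : ℝ} (huv : u ≤ v)
    (hf : IntervalIntegrable f MeasureTheory.volume u v)
    (hη : ∀ t ∈ Set.Icc u v, ‖f u - f t‖ ≤ η) :
    ‖(v - u) • f u - ∫ t in u..v, f t‖ ≤ η * (v - u) := by
  rw [← intervalIntegral.integral_const,
    ← intervalIntegral.integral_sub intervalIntegrable_const hf]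
  calc ‖∫ t in u..v, (f u - f t)‖ ≤ η * |v - u| :=
        intervalIntegral.norm_integral_le_of_norm_le_const fun t ht =>
          hη t (Set.Ioc_subset_Icc_self (Set.uIoc_of_le huv ▸ ht))
    _ = η * (v - u) := by rw [abs_of_nonneg (sub_nonneg.2 huv)]

lemma norm_leftRiemannSum_sub_integral_le {f : ℝ → E} {a b η : ℝ} {N : ℕ} (hab : a ≤ b)
    (hN : N ≠ 0) (hf : ContinuousOn f (Set.Icc a b))
    (hη : ∀ s ∈ Set.Icc a b, ∀ t ∈ Set.Icc a b,
      dist s t ≤ (b - a) / N → ‖f s - f t‖ ≤ η) :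
    ‖leftRiemannSum f a b N - ∫ t in a..b, f t‖ ≤ η * (b - a) := by
  set h := (b - a) / N with hh
  have hh0 : 0 ≤ h := div_nonneg (sub_nonneg.2 hab) N.cast_nonneg
  have hNh : (N : ℝ) * h = b - a := by rw [hh]; field_simp
  have grid_mem : ∀ i ≤ N, a + i * h ∈ Set.Icc a b := fun i hi => by
    have : (i : ℝ) * h ≤ N * h := mul_le_mul_of_nonneg_right (by exact_mod_cast hi) hh0
    constructor <;> nlinarith [mul_nonneg (Nat.cast_nonneg (α := ℝ) i) hh0]
  have hcell : ∀ i ∈ range N,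
      ‖h • f (a + i * h) - ∫ t in (a + i * h)..(a + (i + 1 : ℕ) * h), f t‖ ≤ η * h :=
      fun i hi => by
    have hi := mem_range.1 hi
    have hstep : a + (i + 1 : ℕ) * h - (a + i * h) = h := by push_cast; ring
    obtain ⟨hl, -⟩ := grid_mem i hi.le
    obtain ⟨-, hr⟩ := grid_mem (i + 1) hi
    have := norm_smul_sub_intervalIntegral_le (f := f) (η := η) (by linarith)
      ((hf.mono (Set.Icc_subset_Icc hl hr)).intervalIntegrable_of_Icc (by linarith))
      fun t ht => hη _ (grid_mem i hi.le) t ⟨hl.trans ht.1, ht.2.trans hr⟩ (by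
        rw [Real.dist_eq, abs_sub_comm, abs_of_nonneg (by linarith [ht.1])]; linarith [ht.2])
    rwa [hstep] at this
  have hsplit : ∫ t in a..b, f t
      = ∑ i ∈ range N, ∫ t in (a + i * h)..(a + (i + 1 : ℕ) * h), f t := by
    rw [intervalIntegral.sum_integral_adjacent_intervals (a := fun i : ℕ => a + i * h)
      fun i hi => (hf.mono (Set.Icc_subset_Icc (grid_mem i hi.le).1
        (grid_mem (i + 1) hi).2)).intervalIntegrable_of_Icc (by push_cast; nlinarith)]
    simp [hNh]
  calc ‖leftRiemannSum f a b N - ∫ t in a..b, f t‖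
      = ‖∑ i ∈ range N,
          (h • f (a + i * h) - ∫ t in (a + i * h)..(a + (i + 1 : ℕ) * h), f t)‖ := by
        rw [hsplit, sum_sub_distrib]; rfl
    _ ≤ ∑ _i ∈ range N, η * h := norm_sum_le_of_le _ hcell
    _ = η * (b - a) := by rw [sum_const, card_range, nsmul_eq_mul, ← hNh]; ring

theorem ContinuousOn.tendsto_leftRiemannSum {f : ℝ → E} {a b : ℝ} (hab : a ≤ b)
    (hf : ContinuousOn f (Set.Icc a b)) :
    Tendsto (leftRiemannSum f a b) atTop (𝓝 (∫ t in a..b, f t)) := by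
  rw [Metric.tendsto_nhds]
  intro e he
  set η := e / (b - a + 1)
  have hη : η * (b - a) < e := by
    rw [div_mul_eq_mul_div, div_lt_iff₀ (by linarith)]; nlinarith
  obtain ⟨δ, hδ, hfδ⟩ := Metric.uniformContinuousOn_iff_le.1
    (isCompact_Icc.uniformContinuousOn_of_continuous hf) η (by positivity)
  filter_upwards [eventually_ne_atTop 0,
    (tendsto_const_div_atTop_nhds_zero_nat (b - a)).eventually (ge_mem_nhds hδ)] with N hN hNδ
  rw [dist_eq_norm]
  refine (norm_leftRiemannSum_sub_integral_le hab hN hf fun s hs t ht hst => ?_).trans_lt hη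
  simpa [dist_eq_norm] using hfδ s hs t ht (hst.trans hNδ)

end RiemannSum

lemma sum_Icc_mul_sub_eq (e : ℝ → ℝ) (a h : ℝ) (N : ℕ) :
    ∑ n ∈ Icc 1 N, (a + n * h) * (e (a + ((n : ℝ) - 1) * h) - e (a + n * h))
      = a * e a - (a + N * h) * e (a + N * h) + ∑ i ∈ range N, h * e (a + i * h) := by
  induction N with
  | zero => simp
  | succ N ih =>
    rw [sum_Icc_succ_top (by omega), ih, sum_range_succ]
    push_cast
    ring_nf

section Gibbs

variable {d : ℕ} {ω : Fin d → ℝ} {β : ℝ}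

noncomputable def meanEnergy (d : ℕ) (ω : Fin d → ℝ) (β x : ℝ) : ℝ :=
  ∑ k, ω k * pfun d ω β x k

lemma Zfun_pos (hd : 1 ≤ d) (x : ℝ) : 0 < Zfun d ω β x :=
  haveI : Nonempty (Fin d) := Fin.pos_iff_nonempty.1 hd
  sum_pos (fun _ _ => Real.exp_pos _) univ_nonempty

lemma sum_pfun (hd : 1 ≤ d) (x : ℝ) : ∑ k, pfun d ω β x k = 1 := by
  simp only [pfun, ← sum_div]
  exact div_self (Zfun_pos hd x).ne'

lemma continuous_meanEnergy (hd : 1 ≤ d) : Continuous (meanEnergy d ω β) := by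
  unfold meanEnergy pfun Zfun
  refine continuous_finsetSum _ fun k _ => continuous_const.mul (.div (by fun_prop) (by fun_prop)
    fun x => (Zfun_pos hd x).ne')

lemma Sfun_eq (hd : 1 ≤ d) (x : ℝ) :
    Sfun d ω β x = β * x * meanEnergy d ω β x + Real.log (Zfun d ω β x) := by
  have hlog : ∀ k, Real.log (pfun d ω β x k) = -β * x * ω k - Real.log (Zfun d ω β x) :=
      fun k => by
    rw [pfun, Real.log_div (Real.exp_ne_zero _) (Zfun_pos hd x).ne', Real.log_exp]
  have hsum : ∑ k, pfun d ω β x k * Real.log (pfun d ω β x k)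
      = -(β * x) * meanEnergy d ω β x - Real.log (Zfun d ω β x) * ∑ k, pfun d ω β x k := by
    simp only [hlog, meanEnergy, mul_sum, ← sum_sub_distrib]
    exact sum_congr rfl fun k _ => by ring
  rw [Sfun, hsum, sum_pfun hd]
  ring

lemma hasDerivAt_log_Zfun (hd : 1 ≤ d) (x : ℝ) :
    HasDerivAt (fun x => Real.log (Zfun d ω β x)) (-β * meanEnergy d ω β x) x := by
  have hZ : HasDerivAt (Zfun d ω β) (∑ k, -β * ω k * Real.exp (-β * x * ω k)) x := by
    refine HasDerivAt.fun_sum fun k _ => ?_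
    simpa [mul_comm] using (((hasDerivAt_id x).const_mul (-β)).mul_const (ω k)).exp
  convert hZ.log (Zfun_pos hd x).ne' using 1
  simp only [meanEnergy, pfun, mul_sum, sum_div]
  exact sum_congr rfl fun k _ => by ring

lemma integral_meanEnergy (hd : 1 ≤ d) (a b : ℝ) :
    β * ∫ t in a..b, meanEnergy d ω β t
      = Real.log (Zfun d ω β a) - Real.log (Zfun d ω β b) := by
  rw [← intervalIntegral.integral_const_mul, ← neg_sub,
    ← intervalIntegral.integral_eq_sub_of_hasDerivAt (fun t _ => hasDerivAt_log_Zfun hd t)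
      (((continuous_meanEnergy hd).intervalIntegrable _ _).const_mul _),
    ← intervalIntegral.integral_neg]
  simp_rw [neg_mul, neg_neg]

lemma sum_mul_pfun_sub (c a b : ℝ) :
    ∑ k, c * ω k * (pfun d ω β a k - pfun d ω β b k)
      = c * (meanEnergy d ω β a - meanEnergy d ω β b) := by
  simp only [meanEnergy, mul_sub, mul_sum, ← sum_sub_distrib, mul_assoc]

end Gibbs

/-- Diverging-time protocol saturates the Landauer limit: the total heat
`Q_N` dissipated by the sequence of `N` machines with Hamiltonians `(1 + n ε_N)·H_S`
converges to `(1/β)(S(1) − S(x_max))` as `N → ∞`. -/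
theorem diverging_time_landauer (d : ℕ) (hd : 1 ≤ d) (ω : Fin d → ℝ)
    (β : ℝ) (hβ : 0 < β) (xmax : ℝ) (hx : 1 ≤ xmax) :
    Tendsto (fun N : ℕ =>
        ∑ n ∈ Finset.Icc 1 N, ∑ k,
          (1 + (n : ℝ) * ((xmax - 1) / N)) * ω k *
            (pfun d ω β (1 + ((n : ℝ) - 1) * ((xmax - 1) / N)) k
              - pfun d ω β (1 + (n : ℝ) * ((xmax - 1) / N)) k))
      atTop (nhds ((1 / β) * (Sfun d ω β 1 - Sfun d ω β xmax))) := by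
  have hlimit : (1 / β) * (Sfun d ω β 1 - Sfun d ω β xmax) = meanEnergy d ω β 1
      - xmax * meanEnergy d ω β xmax + ∫ t in (1 : ℝ)..xmax, meanEnergy d ω β t := by
    have hint := integral_meanEnergy (ω := ω) (β := β) hd 1 xmax
    rw [Sfun_eq hd, Sfun_eq hd]
    field_simp
    linear_combination -hint
  rw [hlimit]
  refine (tendsto_const_nhds.add
    ((continuous_meanEnergy hd).continuousOn.tendsto_leftRiemannSum hx)).congr' ?_
  filter_upwards [eventually_ne_atTop 0] with N hN
  have hgrid : 1 + (N : ℝ) * ((xmax - 1) / N) = xmax := by field_simp; ring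
  simp only [sum_mul_pfun_sub]
  rw [sum_Icc_mul_sub_eq, hgrid, one_mul]
  rfl
end

section
/- (Perfect cooling in the doubling-degeneracy machine construction.) For θ > 0 and integers N > θ, set ε := θ/N and define p(N) := (1 + ε(1−ε)^N / (1 − (1−ε)^N + ε (1−ε)^N 2^{−N}))^{−1}. Then lim_{N→∞} N·(1 − p(N)) = θ/(e^θ − 1); in particular p(N) → 1 as N → ∞. -/
open Filter

/-- Ground-state population of a maximally mixed qubit after the maximal cooling unitary
with the doubling-degeneracy machine of dimension `2^(N+1)` with `ε = θ/N`. -/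
noncomputable def groundPop (θ : ℝ) (N : ℕ) : ℝ :=
  (1 + (θ / N) * (1 - θ / N) ^ N /
      (1 - (1 - θ / N) ^ N + (θ / N) * (1 - θ / N) ^ N * ((2 : ℝ) ^ N)⁻¹))⁻¹

/-! Writing `p = (1 + x)⁻¹`, the defect is `1 - p = x / (1 + x)` with `N * x → θ / (e^θ - 1)`:
the numerator of `x` carries the factor `ε = θ / N`, while `(1 - ε)^N → e^{-θ}` keeps the rest
bounded and `2^{-N}` kills the correction in the denominator. -/

open Topology

section InvOneAdd

variable {α : Type*} {l : Filter α} {g x : α → ℝ} {L : ℝ}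

lemma tendsto_zero_of_tendsto_mul_of_tendsto_atTop
    (hgx : Tendsto (fun a => g a * x a) l (𝓝 L)) (hg : Tendsto g l atTop) :
    Tendsto x l (𝓝 0) := by
  refine (hgx.div_atTop hg).congr' ?_
  filter_upwards [hg.eventually_ne_atTop 0] with a ha
  field_simp

lemma tendsto_mul_one_sub_inv_one_add
    (hgx : Tendsto (fun a => g a * x a) l (𝓝 L)) (hg : Tendsto g l atTop) :
    Tendsto (fun a => g a * (1 - (1 + x a)⁻¹)) l (𝓝 L) := by
  have h1x : Tendsto (fun a => 1 + x a) l (𝓝 1) := by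
    simpa using (tendsto_zero_of_tendsto_mul_of_tendsto_atTop hgx hg).const_add 1
  have hquot : Tendsto (fun a => g a * x a / (1 + x a)) l (𝓝 (L / 1)) :=
    hgx.div h1x one_ne_zero
  rw [div_one] at hquot
  refine hquot.congr' ?_
  filter_upwards [h1x.eventually_ne one_ne_zero] with a ha
  field_simp
  ring

end InvOneAdd

lemma tendsto_one_sub_div_pow_exp (θ : ℝ) :
    Tendsto (fun N : ℕ => (1 - θ / N) ^ N) atTop (𝓝 (Real.exp (-θ))) := by
  simpa [sub_eq_add_neg, neg_div] using Real.tendsto_one_add_div_pow_exp (-θ)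

lemma mul_exp_neg_div_one_sub_exp_neg (θ : ℝ) (hθ : θ ≠ 0) :
    θ * Real.exp (-θ) / (1 - Real.exp (-θ)) = θ / (Real.exp θ - 1) := by
  have h : Real.exp θ - 1 ≠ 0 := sub_ne_zero.mpr ((Real.exp_eq_one_iff _).not.mpr hθ)
  rw [Real.exp_neg]
  field_simp

/-- The ratio `(1 - p) / p` of excited to ground population. -/
noncomputable def excitedGroundRatio (θ : ℝ) (N : ℕ) : ℝ :=
  (θ / N) * (1 - θ / N) ^ N /
    (1 - (1 - θ / N) ^ N + (θ / N) * (1 - θ / N) ^ N * ((2 : ℝ) ^ N)⁻¹)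

lemma groundPop_eq_inv_one_add (θ : ℝ) (N : ℕ) :
    groundPop θ N = (1 + excitedGroundRatio θ N)⁻¹ :=
  rfl

lemma tendsto_natCast_mul_excitedGroundRatio (θ : ℝ) (hθ : θ ≠ 0) :
    Tendsto (fun N : ℕ => (N : ℝ) * excitedGroundRatio θ N) atTop
      (𝓝 (θ / (Real.exp θ - 1))) := by
  have hq := tendsto_one_sub_div_pow_exp θ
  have hε : Tendsto (fun N : ℕ => θ / N) atTop (𝓝 0) := tendsto_const_div_atTop_nhds_zero_nat θ
  have hpow : Tendsto (fun N : ℕ => ((2 : ℝ) ^ N)⁻¹) atTop (𝓝 0) :=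
    tendsto_inv_atTop_zero.comp (tendsto_pow_atTop_atTop_of_one_lt one_lt_two)
  have hden : Tendsto
      (fun N : ℕ => 1 - (1 - θ / N) ^ N + (θ / N) * (1 - θ / N) ^ N * ((2 : ℝ) ^ N)⁻¹)
      atTop (𝓝 (1 - Real.exp (-θ))) := by
    simpa using (tendsto_const_nhds.sub hq).add ((hε.mul hq).mul hpow)
  have hden_ne : 1 - Real.exp (-θ) ≠ 0 :=
    sub_ne_zero.mpr (Ne.symm ((Real.exp_eq_one_iff _).not.mpr (neg_ne_zero.mpr hθ)))
  rw [← mul_exp_neg_div_one_sub_exp_neg θ hθ]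
  refine ((tendsto_const_nhds.mul hq).div hden hden_ne).congr' ?_
  filter_upwards [eventually_ne_atTop 0] with N hN
  have hN : (N : ℝ) ≠ 0 := Nat.cast_ne_zero.mpr hN
  simp only [excitedGroundRatio, Pi.div_apply]
  field_simp

/-- Perfect cooling in the doubling-degeneracy machine construction:
`N·(1 − p(N)) → θ/(e^θ − 1)`, and in particular `p(N) → 1`. -/
theorem doubling_degeneracy_perfect_cooling (θ : ℝ) (hθ : 0 < θ) :
    Tendsto (fun N : ℕ => (N : ℝ) * (1 - groundPop θ N)) atTop
        (nhds (θ / (Real.exp θ - 1))) ∧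
    Tendsto (fun N : ℕ => groundPop θ N) atTop (nhds 1) := by
  have hNx := tendsto_natCast_mul_excitedGroundRatio θ hθ.ne'
  have hx := tendsto_zero_of_tendsto_mul_of_tendsto_atTop hNx tendsto_natCast_atTop_atTop
  simp only [groundPop_eq_inv_one_add]
  refine ⟨tendsto_mul_one_sub_inv_one_add hNx tendsto_natCast_atTop_atTop, ?_⟩
  simpa using (hx.const_add 1).inv₀ (by norm_num)
end

section
/- (Relative-entropy cost of deviating from the fine-tuned eigenvalue conditions.) Let S be a nonempty finite set, θ ∈ (0,1], N > 0, and let λ, λ' : S → ℝ satisfy λ_n > 0 and λ'_n > 0 for all n, ∑_{n∈S} λ_n = ∑_{n∈S} λ'_n = N, and |λ'_n − λ_n| ≥ θ λ_n for every n ∈ S. Then ∑_{n∈S} λ'_n log(λ'_n/λ_n) ≥ N θ²/2. -/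
/-!
This is Pinsker's inequality in disguise. For positive weights `p`, `q` of equal total mass,
`(∑ |p - q|)² ≤ 2 (∑ q) ∑ p log (p / q)`, and the deviation hypothesis gives
`∑ |λ' - λ| ≥ θ N`. Pinsker follows from the pointwise bound
`3 (t - 1)² ≤ 2 (t + 2) (t log t + 1 - t)` at `t = p / q` and Cauchy–Schwarz with weights
`p + 2 q`, whose total is `3 ∑ q`.
-/

open Real Set Finset InformationTheory

lemma monotoneOn_add_one_mul_log_sub_two_mul_sub_one :
    MonotoneOn (fun t ↦ (t + 1) * log t - 2 * (t - 1)) (Ioi 0) := by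
  have hderiv : ∀ t ∈ Ioi (0 : ℝ),
      HasDerivAt (fun t ↦ (t + 1) * log t - 2 * (t - 1)) (log t + t⁻¹ - 1) t := by
    intro t ht
    have ht : t ≠ 0 := ne_of_gt ht
    refine ((((hasDerivAt_id' t).add_const 1).mul (hasDerivAt_log ht)).sub
      (((hasDerivAt_id' t).sub_const 1).const_mul 2)).congr_deriv ?_
    field_simp
    ring
  refine monotoneOn_of_hasDerivWithinAt_nonneg (f' := fun t ↦ log t + t⁻¹ - 1) (convex_Ioi 0)
    (fun t ht ↦ (hderiv t ht).continuousAt.continuousWithinAt) ?_ ?_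
  · rw [interior_Ioi]
    exact fun t ht ↦ (hderiv t ht).hasDerivWithinAt
  · rw [interior_Ioi]
    intro t ht
    linarith [one_sub_inv_le_log_of_pos (mem_Ioi.mp ht)]

lemma three_mul_sq_sub_one_le_mul_klFun {t : ℝ} (ht : 0 < t) :
    3 * (t - 1) ^ 2 ≤ 2 * (t + 2) * klFun t := by
  set f : ℝ → ℝ := fun t ↦ 2 * (t + 2) * klFun t - 3 * (t - 1) ^ 2
  set g : ℝ → ℝ := fun t ↦ (t + 1) * log t - 2 * (t - 1)
  have hderiv : ∀ t ∈ Ioi (0 : ℝ), HasDerivAt f (4 * g t) t := by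
    intro t ht
    refine ((((hasDerivAt_id' t).add_const 2).const_mul 2).mul
      (hasDerivAt_klFun (ne_of_gt ht))).sub
      ((((hasDerivAt_id' t).sub_const 1).pow 2).const_mul 3) |>.congr_deriv ?_
    simp only [g, klFun_apply]
    ring
  have hdiff : DifferentiableOn ℝ f (Ioi 0) :=
    fun t ht ↦ (hderiv t ht).differentiableAt.differentiableWithinAt
  have hg_mono := monotoneOn_add_one_mul_log_sub_two_mul_sub_one
  have hg_one : g 1 = 0 := by simp [g]
  have hmin : IsMinOn f (Ioi 0) 1 := by
    refine isMinOn_Ioi_of_deriv (hderiv 1 (mem_Ioi.mpr one_pos)).continuousAt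
      (hdiff.mono Ioo_subset_Ioi_self) (hdiff.mono (Ioi_subset_Ioi zero_le_one)) ?_ ?_
    · intro t ht
      rw [(hderiv t ht.1).deriv]
      linarith [hg_mono ht.1 (mem_Ioi.mpr one_pos) ht.2.le]
    · intro t ht
      have ht0 : (0 : ℝ) < t := one_pos.trans ht
      rw [(hderiv t ht0).deriv]
      linarith [hg_mono (mem_Ioi.mpr one_pos) ht0 (le_of_lt ht)]
  have := hmin ht
  simp only [mem_ofPred_eq, f, klFun_one] at this
  linarith

lemma three_mul_sq_sub_le_mul_klFun_div {a b : ℝ} (ha : 0 < a) (hb : 0 < b) :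
    3 * (a - b) ^ 2 ≤ 2 * (a + 2 * b) * (b * klFun (a / b)) := by
  have key := mul_le_mul_of_nonneg_right (three_mul_sq_sub_one_le_mul_klFun (div_pos ha hb))
    (sq_nonneg b)
  calc 3 * (a - b) ^ 2 = 3 * (a / b - 1) ^ 2 * b ^ 2 := by field_simp
    _ ≤ 2 * (a / b + 2) * klFun (a / b) * b ^ 2 := key
    _ = 2 * (a + 2 * b) * (b * klFun (a / b)) := by field_simp

theorem sq_sum_abs_sub_le_two_mul_sum_mul_sum_mul_log {ι : Type*} (s : Finset ι) {p q : ι → ℝ}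
    (hp : ∀ i ∈ s, 0 < p i) (hq : ∀ i ∈ s, 0 < q i) (hpq : ∑ i ∈ s, p i = ∑ i ∈ s, q i) :
    (∑ i ∈ s, |p i - q i|) ^ 2 ≤ 2 * (∑ i ∈ s, q i) * ∑ i ∈ s, p i * log (p i / q i) := by
  have hperspective : ∑ i ∈ s, q i * klFun (p i / q i) = ∑ i ∈ s, p i * log (p i / q i) := by
    have : ∀ i ∈ s, q i * klFun (p i / q i) = p i * log (p i / q i) + q i - p i := by
      intro i hi
      rw [klFun_apply]
      field_simp [(hq i hi).ne']
    rw [sum_congr rfl this, sum_sub_distrib, sum_add_distrib, hpq, add_sub_cancel_right]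
  calc (∑ i ∈ s, |p i - q i|) ^ 2
      ≤ (∑ i ∈ s, (p i + 2 * q i)) * ∑ i ∈ s, 2 / 3 * (q i * klFun (p i / q i)) := by
        refine sum_sq_le_sum_mul_sum_of_sq_le_mul s
          (fun i hi ↦ by linarith [hp i hi, hq i hi])
          (fun i hi ↦ mul_nonneg (by norm_num)
            (mul_nonneg (hq i hi).le (klFun_nonneg (div_pos (hp i hi) (hq i hi)).le)))
          fun i hi ↦ ?_
        rw [sq_abs]
        linarith [three_mul_sq_sub_le_mul_klFun_div (hp i hi) (hq i hi)]
    _ = 2 * (∑ i ∈ s, q i) * ∑ i ∈ s, p i * log (p i / q i) := by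
        rw [← mul_sum, hperspective, sum_add_distrib, ← mul_sum, hpq]
        ring

theorem relative_entropy_deviation_bound_general {α : Type*} [Fintype α]
    (θ N : ℝ) (hθ0 : 0 < θ) (hN : 0 < N)
    (lam lam' : α → ℝ) (hlam : ∀ n, 0 < lam n) (hlam' : ∀ n, 0 < lam' n)
    (hsum : ∑ n, lam n = N) (hsum' : ∑ n, lam' n = N)
    (hdev : ∀ n, θ * lam n ≤ |lam' n - lam n|) :
    N * θ ^ 2 / 2 ≤ ∑ n, lam' n * Real.log (lam' n / lam n) := by
  have hpinsker := sq_sum_abs_sub_le_two_mul_sum_mul_sum_mul_log univ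
    (fun n _ ↦ hlam' n) (fun n _ ↦ hlam n) (hsum'.trans hsum.symm)
  rw [hsum] at hpinsker
  have htotal : θ * N ≤ ∑ n, |lam' n - lam n| := by
    rw [← hsum, mul_sum]
    exact sum_le_sum fun n _ ↦ hdev n
  have hsq : N * (N * θ ^ 2) ≤ N * (2 * ∑ n, lam' n * log (lam' n / lam n)) := by
    nlinarith [pow_le_pow_left₀ (by positivity) htotal 2]
  linarith [le_of_mul_le_mul_left hsq hN]

/-- Relative-entropy cost of deviating from the fine-tuned eigenvalue
conditions: if all population ratios deviate from 1 by at least `θ`, the (unnormalised)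
relative entropy on the subspace of total population `N` is at least `N θ²/2`. -/
theorem relative_entropy_deviation_bound {α : Type*} [Fintype α] [Nonempty α]
    (θ N : ℝ) (hθ0 : 0 < θ) (hθ1 : θ ≤ 1) (hN : 0 < N)
    (lam lam' : α → ℝ) (hlam : ∀ n, 0 < lam n) (hlam' : ∀ n, 0 < lam' n)
    (hsum : ∑ n, lam n = N) (hsum' : ∑ n, lam' n = N)
    (hdev : ∀ n, θ * lam n ≤ |lam' n - lam n|) :
    N * θ ^ 2 / 2 ≤ ∑ n, lam' n * Real.log (lam' n / lam n) :=
  relative_entropy_deviation_bound_general θ N hθ0 hN lam lam' hlam hlam' hsum hsum' hdev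
end

section
/- (Necessity of degeneracies for incoherent cooling; Lemma on non-degenerate levels.) Let d_S, d_C, d_H ≥ 1, β ≥ 0, β_H ≥ 0, and let ω_S : Fin d_S → ℝ, ω_C : Fin d_C → ℝ, ω_H : Fin d_H → ℝ be nonnegative with ω_S(0) = ω_C(0) = ω_H(0) = 0. Let τ_S, τ_C, τ_H be the diagonal Gibbs states with diagonal entries e^{−β ω_S(i)}/Z_S, e^{−β ω_C(j)}/Z_C, e^{−β_H ω_H(k)}/Z_H respectively, where Z_S := ∑_i e^{−β ω_S(i)} etc. Suppose there exists i* ≠ 0 such that ω_S(i*) ≠ ω_C(j) + ω_H(k) for all j, k. Then for every unitary U on ℂ^{d_S} ⊗ ℂ^{d_C} ⊗ ℂ^{d_H} that commutes with the diagonal matrix with entries ω_S(i) + ω_C(j) + ω_H(k), the final ground-state population of the target satisfies ⟨e_0| Tr_{CH}[U (τ_S ⊗ τ_C ⊗ τ_H) U†] |e_0⟩ ≤ 1 − e^{−β ω_S(i*)}/(Z_S d_C d_H) < 1. -/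
open scoped Kronecker ComplexOrder
open Matrix

private lemma diag_conj_entry_re {n : Type*} [Fintype n] [DecidableEq n]
    (U : Matrix n n ℂ) (v : n → ℝ) (r : n) :
    ((U * Matrix.diagonal (fun p => ((v p : ℝ) : ℂ)) * Uᴴ) r r).re
      = ∑ p, v p * Complex.normSq (U r p) := by
  rw [Matrix.mul_apply, Complex.re_sum]
  refine Finset.sum_congr rfl fun p _ => ?_
  rw [Matrix.mul_diagonal, Matrix.conjTranspose_apply]
  have : U r p * (v p : ℂ) * star (U r p)
       = ((v p * Complex.normSq (U r p) : ℝ) : ℂ) := by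
    push_cast
    rw [show star (U r p) = (starRingEnd ℂ) (U r p) from rfl,
      mul_comm (U r p), mul_assoc, Complex.mul_conj]
  rw [this, Complex.ofReal_re]

set_option maxHeartbeats 1000000 in
/-- Necessity of degeneracies for incoherent cooling: if some excited
level `i*` of the target is not degenerate with any joint machine level, then no
energy-conserving unitary can bring the target's ground-state population above
`1 − e^{−β ω_S(i*)}/(Z_S d_C d_H) < 1`. -/
theorem incoherent_cooling_needs_degeneracy
    (dS dC dH : ℕ) [NeZero dS] [NeZero dC] [NeZero dH]
    (β βH : ℝ) (hβ : 0 ≤ β) (hβH : 0 ≤ βH)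
    (ωS : Fin dS → ℝ) (ωC : Fin dC → ℝ) (ωH : Fin dH → ℝ)
    (hωS : ∀ i, 0 ≤ ωS i) (hωC : ∀ j, 0 ≤ ωC j) (hωH : ∀ k, 0 ≤ ωH k)
    (hωS0 : ωS 0 = 0) (hωC0 : ωC 0 = 0) (hωH0 : ωH 0 = 0)
    (istar : Fin dS) (histar : istar ≠ 0)
    (hnodeg : ∀ (j : Fin dC) (k : Fin dH), ωS istar ≠ ωC j + ωH k)
    (U : Matrix (Fin dS × Fin dC × Fin dH) (Fin dS × Fin dC × Fin dH) ℂ)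
    (hU : U ∈ Matrix.unitaryGroup (Fin dS × Fin dC × Fin dH) ℂ)
    (hEC : U * Matrix.diagonal (fun p : Fin dS × Fin dC × Fin dH =>
            ((ωS p.1 + ωC p.2.1 + ωH p.2.2 : ℝ) : ℂ))
        = Matrix.diagonal (fun p : Fin dS × Fin dC × Fin dH =>
            ((ωS p.1 + ωC p.2.1 + ωH p.2.2 : ℝ) : ℂ)) * U) :
    (∑ jk : Fin dC × Fin dH,
        (U * ((Matrix.diagonal fun i => ((Real.exp (-β * ωS i)
                  / ∑ i', Real.exp (-β * ωS i') : ℝ) : ℂ))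
            ⊗ₖ ((Matrix.diagonal fun j => ((Real.exp (-β * ωC j)
                  / ∑ j', Real.exp (-β * ωC j') : ℝ) : ℂ))
              ⊗ₖ (Matrix.diagonal fun k => ((Real.exp (-βH * ωH k)
                  / ∑ k', Real.exp (-βH * ωH k') : ℝ) : ℂ)))) * Uᴴ)
          (0, jk) (0, jk)).re
      ≤ 1 - Real.exp (-β * ωS istar)
            / ((∑ i', Real.exp (-β * ωS i')) * dC * dH) ∧
    1 - Real.exp (-β * ωS istar) / ((∑ i', Real.exp (-β * ωS i')) * dC * dH) < 1 := by
  classical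
  set ZS := ∑ i', Real.exp (-β * ωS i') with hZSdef
  set ZC := ∑ j', Real.exp (-β * ωC j') with hZCdef
  set ZH := ∑ k', Real.exp (-βH * ωH k') with hZHdef
  have hZSpos : 0 < ZS := Finset.sum_pos (fun i _ => Real.exp_pos _) Finset.univ_nonempty
  have hZCpos : 0 < ZC := Finset.sum_pos (fun i _ => Real.exp_pos _) Finset.univ_nonempty
  have hZHpos : 0 < ZH := Finset.sum_pos (fun i _ => Real.exp_pos _) Finset.univ_nonempty
  have hdCpos : (0:ℝ) < dC := by
    exact_mod_cast Nat.pos_of_ne_zero (NeZero.ne dC)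
  have hdHpos : (0:ℝ) < dH := by
    exact_mod_cast Nat.pos_of_ne_zero (NeZero.ne dH)
  have hZCle : ZC ≤ dC := by
    calc ZC ≤ ∑ _j : Fin dC, (1:ℝ) := by
          refine Finset.sum_le_sum fun j _ => ?_
          rw [Real.exp_le_one_iff]
          have := mul_nonneg hβ (hωC j); linarith
      _ = dC := by simp
  have hZHle : ZH ≤ dH := by
    calc ZH ≤ ∑ _k : Fin dH, (1:ℝ) := by
          refine Finset.sum_le_sum fun k _ => ?_
          rw [Real.exp_le_one_iff]
          have := mul_nonneg hβH (hωH k); linarith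
      _ = dH := by simp
  -- the diagonal weights
  set d : Fin dS × Fin dC × Fin dH → ℝ := fun p =>
    Real.exp (-β * ωS p.1) / ZS *
      (Real.exp (-β * ωC p.2.1) / ZC * (Real.exp (-βH * ωH p.2.2) / ZH)) with hddef
  have hd0 : ∀ p, 0 ≤ d p := fun p => by
    have h1 := Real.exp_pos (-β * ωS p.1)
    have h2 := Real.exp_pos (-β * ωC p.2.1)
    have h3 := Real.exp_pos (-βH * ωH p.2.2)
    positivity
  -- Kronecker product of diagonals is diagonal
  have hkron :
      ((Matrix.diagonal fun i => ((Real.exp (-β * ωS i) / ZS : ℝ) : ℂ))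
        ⊗ₖ ((Matrix.diagonal fun j => ((Real.exp (-β * ωC j) / ZC : ℝ) : ℂ))
          ⊗ₖ (Matrix.diagonal fun k => ((Real.exp (-βH * ωH k) / ZH : ℝ) : ℂ))))
      = Matrix.diagonal (fun p => ((d p : ℝ) : ℂ)) := by
    rw [Matrix.diagonal_kronecker_diagonal, Matrix.diagonal_kronecker_diagonal]
    congr 1
    funext p
    push_cast [hddef]
    ring
  -- column sums of |U|² are 1
  have hUcol : ∀ p, ∑ r, Complex.normSq (U r p) = 1 := by
    intro p
    have h1 : (star U * U) = 1 := (Matrix.mem_unitaryGroup_iff'.mp hU)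
    have h2 := congrArg (fun M => (M p p).re) h1
    simp only [Matrix.mul_apply, Matrix.one_apply_eq, Complex.one_re] at h2
    rw [← h2, Complex.re_sum]
    refine Finset.sum_congr rfl fun r _ => ?_
    rw [Matrix.star_apply]
    rw [show star (U r p) = (starRingEnd ℂ) (U r p) from rfl, mul_comm,
      Complex.mul_conj]
    simp
  set s : Fin dS × Fin dC × Fin dH → ℝ :=
    fun p => ∑ jk : Fin dC × Fin dH, Complex.normSq (U (0, jk) p) with hsdef
  have hs0 : ∀ p, 0 ≤ s p :=
    fun p => Finset.sum_nonneg fun jk _ => Complex.normSq_nonneg _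
  have hs1 : ∀ p, s p ≤ 1 := by
    intro p
    rw [← hUcol p, Fintype.sum_prod_type]
    exact Finset.single_le_sum
      (f := fun i => ∑ jk : Fin dC × Fin dH, Complex.normSq (U (i, jk) p))
      (fun i _ => Finset.sum_nonneg fun jk _ => Complex.normSq_nonneg _)
      (Finset.mem_univ 0)
  set pstar : Fin dS × Fin dC × Fin dH := (istar, 0, 0) with hpstar
  have hspstar : s pstar = 0 := by
    rw [hsdef]
    refine Finset.sum_eq_zero fun jk _ => ?_
    have h := congrArg (fun M => M (0, jk) pstar) hEC
    simp only [Matrix.mul_diagonal, Matrix.diagonal_mul] at h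
    have hne : ((ωS pstar.1 + ωC pstar.2.1 + ωH pstar.2.2 : ℝ) : ℂ)
        ≠ ((ωS (0, jk).1 + ωC (0, jk).2.1 + ωH (0, jk).2.2 : ℝ) : ℂ) := by
      simp only [hpstar, hωS0, hωC0, hωH0]
      rw [Ne, Complex.ofReal_inj]
      intro hcontra
      exact hnodeg jk.1 jk.2 (by linarith)
    have hz : U (0, jk) pstar *
        (((ωS pstar.1 + ωC pstar.2.1 + ωH pstar.2.2 : ℝ) : ℂ)
          - ((ωS (0, jk).1 + ωC (0, jk).2.1 + ωH (0, jk).2.2 : ℝ) : ℂ)) = 0 := by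
      rw [mul_sub, h]; ring
    rcases mul_eq_zero.mp hz with h0 | h0
    · rw [h0, Complex.normSq_zero]
    · exact absurd (sub_eq_zero.mp h0) hne
  -- total weight is 1
  have hdsum : ∑ p, d p = 1 := by
    have h1 : ∑ i, Real.exp (-β * ωS i) / ZS = 1 := by
      rw [← Finset.sum_div, div_self hZSpos.ne']
    have h2 : ∑ j, Real.exp (-β * ωC j) / ZC = 1 := by
      rw [← Finset.sum_div, div_self hZCpos.ne']
    have h3 : ∑ k, Real.exp (-βH * ωH k) / ZH = 1 := by
      rw [← Finset.sum_div, div_self hZHpos.ne']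
    calc ∑ p, d p
        = ∑ i, ∑ j, ∑ k, Real.exp (-β * ωS i) / ZS *
            (Real.exp (-β * ωC j) / ZC * (Real.exp (-βH * ωH k) / ZH)) := by
          rw [Fintype.sum_prod_type]
          exact Finset.sum_congr rfl fun i _ => Fintype.sum_prod_type _
      _ = (∑ i, Real.exp (-β * ωS i) / ZS) *
            ((∑ j, Real.exp (-β * ωC j) / ZC) * (∑ k, Real.exp (-βH * ωH k) / ZH)) := by
          simp_rw [Finset.sum_mul, Finset.mul_sum]
      _ = 1 := by rw [h1, h2, h3, one_mul, one_mul]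
  -- rewrite the population
  have hpop : (∑ jk : Fin dC × Fin dH,
        (U * ((Matrix.diagonal fun i => ((Real.exp (-β * ωS i) / ZS : ℝ) : ℂ))
            ⊗ₖ ((Matrix.diagonal fun j => ((Real.exp (-β * ωC j) / ZC : ℝ) : ℂ))
              ⊗ₖ (Matrix.diagonal fun k => ((Real.exp (-βH * ωH k) / ZH : ℝ) : ℂ))))
          * Uᴴ) (0, jk) (0, jk)).re
      = ∑ p, d p * s p := by
    rw [hkron]
    calc (∑ jk : Fin dC × Fin dH,
          (U * Matrix.diagonal (fun p => ((d p : ℝ) : ℂ)) * Uᴴ) (0, jk) (0, jk)).re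
        = ∑ jk : Fin dC × Fin dH,
            ((U * Matrix.diagonal (fun p => ((d p : ℝ) : ℂ)) * Uᴴ) (0, jk) (0, jk)).re := by
          rw [Complex.re_sum]
      _ = ∑ jk : Fin dC × Fin dH, ∑ p, d p * Complex.normSq (U (0, jk) p) := by
          exact Finset.sum_congr rfl fun jk _ => diag_conj_entry_re U d (0, jk)
      _ = ∑ p, d p * s p := by
          rw [Finset.sum_comm]
          exact Finset.sum_congr rfl fun p _ => by rw [hsdef, Finset.mul_sum]
  constructor
  · rw [hpop]
    have hbound : ∑ p, d p * s p ≤ 1 - d pstar := by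
      have step1 : ∑ p, d p * s p
          = ∑ p ∈ Finset.univ.erase pstar, d p * s p := by
        rw [← Finset.add_sum_erase _ _ (Finset.mem_univ pstar), hspstar, mul_zero, zero_add]
      have step2 : ∑ p ∈ Finset.univ.erase pstar, d p * s p
          ≤ ∑ p ∈ Finset.univ.erase pstar, d p :=
        Finset.sum_le_sum fun p _ => mul_le_of_le_one_right (hd0 p) (hs1 p)
      have step3 : ∑ p ∈ Finset.univ.erase pstar, d p = 1 - d pstar := by
        rw [Finset.sum_erase_eq_sub (Finset.mem_univ pstar), hdsum]
      linarith
    have hdpstar : Real.exp (-β * ωS istar) / (ZS * dC * dH) ≤ d pstar := by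
      have : d pstar = Real.exp (-β * ωS istar) / (ZS * (ZC * ZH)) := by
        simp only [hddef, hpstar, hωC0, hωH0, mul_zero, Real.exp_zero]
        field_simp
      rw [this, mul_assoc]
      refine div_le_div_of_nonneg_left (Real.exp_pos _).le
        (mul_pos hZSpos (mul_pos hZCpos hZHpos)) ?_
      exact mul_le_mul_of_nonneg_left (mul_le_mul hZCle hZHle hZHpos.le hdCpos.le)
        hZSpos.le
    linarith
  · have h0 : 0 < Real.exp (-β * ωS istar) / (ZS * dC * dH) :=
      div_pos (Real.exp_pos _) (mul_pos (mul_pos hZSpos hdCpos) hdHpos)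
    linarith
end

section
/- (No-go for perfect incoherent cooling with finite machines, quantitative form of Theorem 7.) Let d_S ≥ 2, d_C, d_H ≥ 1, 0 < β < ∞, 0 ≤ β_H ≤ β, and let ω_S : Fin d_S → ℝ, ω_C : Fin d_C → ℝ, ω_H : Fin d_H → ℝ be nonnegative with ω_S(0) = ω_C(0) = ω_H(0) = 0. Let τ_S, τ_C, τ_H be the diagonal Gibbs states with diagonal entries e^{−β ω_S(i)}/Z_S, e^{−β ω_C(j)}/Z_C, e^{−β_H ω_H(k)}/Z_H respectively. Then for every unitary U on ℂ^{d_S} ⊗ ℂ^{d_C} ⊗ ℂ^{d_H} commuting with the diagonal matrix with entries ω_S(i) + ω_C(j) + ω_H(k), and for every index i ≠ 0, the final ground-state population of the target satisfies ⟨e_0| Tr_{CH}[U (τ_S ⊗ τ_C ⊗ τ_H) U†] |e_0⟩ ≤ 1 − e^{−2β ω_S(i)}/(Z_S d_C d_H). In particular, no energy-conserving unitary with finite-dimensional machines can bring the target's ground-state population to 1, regardless of the energy drawn from the hot bath. -/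
set_option maxHeartbeats 4000000


open scoped Kronecker ComplexOrder
open Matrix

/-- No-go for perfect incoherent cooling with finite machines, quantitative
form: for any energy-conserving unitary with finite-dimensional thermal machines, the final
ground-state population of the target is bounded away from `1` by
`e^{−2β ω_S(i)}/(Z_S d_C d_H)` for every excited level `i ≠ 0`. -/
theorem incoherent_cooling_no_go
    (dS dC dH : ℕ) [NeZero dS] [NeZero dC] [NeZero dH] (hdS : 2 ≤ dS)
    (β βH : ℝ) (hβ : 0 < β) (hβH0 : 0 ≤ βH) (hβH : βH ≤ β)
    (ωS : Fin dS → ℝ) (ωC : Fin dC → ℝ) (ωH : Fin dH → ℝ)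
    (hωS : ∀ i, 0 ≤ ωS i) (hωC : ∀ j, 0 ≤ ωC j) (hωH : ∀ k, 0 ≤ ωH k)
    (hωS0 : ωS 0 = 0) (hωC0 : ωC 0 = 0) (hωH0 : ωH 0 = 0)
    (U : Matrix (Fin dS × Fin dC × Fin dH) (Fin dS × Fin dC × Fin dH) ℂ)
    (hU : U ∈ Matrix.unitaryGroup (Fin dS × Fin dC × Fin dH) ℂ)
    (hEC : U * Matrix.diagonal (fun p : Fin dS × Fin dC × Fin dH =>
            ((ωS p.1 + ωC p.2.1 + ωH p.2.2 : ℝ) : ℂ))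
        = Matrix.diagonal (fun p : Fin dS × Fin dC × Fin dH =>
            ((ωS p.1 + ωC p.2.1 + ωH p.2.2 : ℝ) : ℂ)) * U) :
    ∀ i : Fin dS, i ≠ 0 →
      (∑ jk : Fin dC × Fin dH,
          (U * ((Matrix.diagonal fun i' => ((Real.exp (-β * ωS i')
                    / ∑ i'', Real.exp (-β * ωS i'') : ℝ) : ℂ))
              ⊗ₖ ((Matrix.diagonal fun j => ((Real.exp (-β * ωC j)
                    / ∑ j', Real.exp (-β * ωC j') : ℝ) : ℂ))
                ⊗ₖ (Matrix.diagonal fun k => ((Real.exp (-βH * ωH k)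
                    / ∑ k', Real.exp (-βH * ωH k') : ℝ) : ℂ)))) * Uᴴ)
            (0, jk) (0, jk)).re
        ≤ 1 - Real.exp (-2 * β * ωS i)
              / ((∑ i', Real.exp (-β * ωS i')) * dC * dH) := by
  intro i hi
  set ZS : ℝ := ∑ i'', Real.exp (-β * ωS i'') with hZS
  set ZC : ℝ := ∑ j', Real.exp (-β * ωC j') with hZC
  set ZH : ℝ := ∑ k', Real.exp (-βH * ωH k') with hZH
  have hne : (Finset.univ : Finset (Fin dS)).Nonempty := Finset.univ_nonempty
  have hZSpos : 0 < ZS := Finset.sum_pos (fun _ _ => Real.exp_pos _) Finset.univ_nonempty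
  have hZCpos : 0 < ZC := Finset.sum_pos (fun _ _ => Real.exp_pos _) Finset.univ_nonempty
  have hZHpos : 0 < ZH := Finset.sum_pos (fun _ _ => Real.exp_pos _) Finset.univ_nonempty
  have hdCpos : (0:ℝ) < dC := Nat.cast_pos.mpr (Nat.pos_of_ne_zero (NeZero.ne dC))
  have hdHpos : (0:ℝ) < dH := Nat.cast_pos.mpr (Nat.pos_of_ne_zero (NeZero.ne dH))
  set g : Fin dS × Fin dC × Fin dH → ℝ := fun p =>
    Real.exp (-β * ωS p.1) / ZS *
      (Real.exp (-β * ωC p.2.1) / ZC * (Real.exp (-βH * ωH p.2.2) / ZH)) with hg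
  have hgnn : ∀ p, 0 ≤ g p := fun p => by positivity
  -- the Kronecker product is a diagonal matrix
  have hD : ((Matrix.diagonal fun i' => ((Real.exp (-β * ωS i') / ZS : ℝ) : ℂ))
              ⊗ₖ ((Matrix.diagonal fun j => ((Real.exp (-β * ωC j) / ZC : ℝ) : ℂ))
                ⊗ₖ (Matrix.diagonal fun k => ((Real.exp (-βH * ωH k) / ZH : ℝ) : ℂ))))
      = Matrix.diagonal (fun p : Fin dS × Fin dC × Fin dH => ((g p : ℝ) : ℂ)) := by
    rw [Matrix.diagonal_kronecker_diagonal, Matrix.diagonal_kronecker_diagonal]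
    congr 1
    funext p
    push_cast [hg]
    ring
  -- entries of the conjugated matrix
  set F : Fin dS × Fin dC × Fin dH → ℝ := fun r =>
    ∑ q, g q * Complex.normSq (U r q) with hF
  have hentry : ∀ r : Fin dS × Fin dC × Fin dH,
      ((U * Matrix.diagonal (fun p : Fin dS × Fin dC × Fin dH => ((g p : ℝ) : ℂ)) * Uᴴ) r r).re
        = F r := by
    intro r
    rw [Matrix.mul_apply]
    have : ∀ q, (U * Matrix.diagonal (fun p : Fin dS × Fin dC × Fin dH => ((g p : ℝ) : ℂ))) r q
        * Uᴴ q r = ((g q * Complex.normSq (U r q) : ℝ) : ℂ) := by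
      intro q
      rw [Matrix.mul_diagonal, Matrix.conjTranspose_apply]
      push_cast
      rw [show U r q * (g q : ℂ) * star (U r q) = (g q : ℂ) * (U r q * star (U r q)) by ring]
      rw [show star (U r q) = (starRingEnd ℂ) (U r q) from rfl, Complex.mul_conj]
    simp only [this]
    rw [← Complex.ofReal_sum]
    exact Complex.ofReal_re _
  have hFnn : ∀ r, 0 ≤ F r := fun r =>
    Finset.sum_nonneg fun q _ => mul_nonneg (hgnn q) (Complex.normSq_nonneg _)
  -- unitarity: column sums and row sums
  have hcol : ∀ q, ∑ r, Complex.normSq (U r q) = 1 := by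
    intro q
    have h1 : (star U * U) q q = 1 := by
      rw [Matrix.mem_unitaryGroup_iff'.mp hU]; simp
    rw [Matrix.mul_apply] at h1
    have h2 : ∀ r, (star U) q r * U r q = ((Complex.normSq (U r q) : ℝ) : ℂ) := by
      intro r
      rw [Matrix.star_eq_conjTranspose, Matrix.conjTranspose_apply]
      exact (Complex.normSq_eq_conj_mul_self).symm
    simp only [h2] at h1
    rw [← Complex.ofReal_sum] at h1
    exact_mod_cast h1
  have hrow : ∀ r, ∑ q, Complex.normSq (U r q) = 1 := by
    intro r
    have h1 : (U * star U) r r = 1 := by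
      rw [Matrix.mem_unitaryGroup_iff.mp hU]; simp
    rw [Matrix.mul_apply] at h1
    have h2 : ∀ q, U r q * (star U) q r = ((Complex.normSq (U r q) : ℝ) : ℂ) := by
      intro q
      rw [Matrix.star_eq_conjTranspose, Matrix.conjTranspose_apply]
      exact Complex.mul_conj _
    simp only [h2] at h1
    rw [← Complex.ofReal_sum] at h1
    exact_mod_cast h1
  -- the Gibbs weights sum to 1
  have hsum_g : ∑ p, g p = 1 := by
    have : ∑ p, g p = (∑ i', Real.exp (-β * ωS i') / ZS) *
        ((∑ j', Real.exp (-β * ωC j') / ZC) * (∑ k', Real.exp (-βH * ωH k') / ZH)) := by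
      rw [Fintype.sum_prod_type]
      simp only [Fintype.sum_prod_type, hg]
      simp only [← Finset.mul_sum, ← Finset.sum_mul]
    rw [this, ← Finset.sum_div, ← Finset.sum_div, ← Finset.sum_div,
      div_self hZSpos.ne', div_self hZCpos.ne', div_self hZHpos.ne']
    ring
  -- total sum of F is 1
  have hFtot : ∑ r, F r = 1 := by
    rw [hF]
    calc ∑ r, ∑ q, g q * Complex.normSq (U r q)
        = ∑ q, ∑ r, g q * Complex.normSq (U r q) :=
          Finset.sum_comm (f := fun (r q : Fin dS × Fin dC × Fin dH) =>
            g q * Complex.normSq (U r q))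
      _ = ∑ q, g q * ∑ r, Complex.normSq (U r q) := by
          refine Finset.sum_congr rfl fun q _ => (Finset.mul_sum _ _ _).symm
      _ = ∑ q, g q := by simp only [hcol, mul_one]
      _ = 1 := hsum_g
  -- energy conservation: row (i,0,0) only connects to states of energy ωS i
  have hEC' : ∀ q : Fin dS × Fin dC × Fin dH, U (i, 0, 0) q ≠ 0 →
      ωS q.1 + ωC q.2.1 + ωH q.2.2 = ωS i := by
    intro q hq
    have h1 := congrFun (congrFun hEC (i, 0, 0)) q
    rw [Matrix.mul_diagonal, Matrix.diagonal_mul] at h1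
    have h2 : ((ωS q.1 + ωC q.2.1 + ωH q.2.2 : ℝ) : ℂ)
        = ((ωS i + ωC 0 + ωH 0 : ℝ) : ℂ) :=
      mul_left_cancel₀ hq (h1.trans (mul_comm _ _))
    have h3 : ωS q.1 + ωC q.2.1 + ωH q.2.2 = ωS i + ωC 0 + ωH 0 := by exact_mod_cast h2
    rwa [hωC0, hωH0, add_zero, add_zero] at h3
  -- lower bound on Gibbs weights on the energy shell
  set c : ℝ := Real.exp (-β * ωS i) / (ZS * dC * dH) with hc
  have hcpos : 0 < c := by positivity
  have hglb : ∀ q : Fin dS × Fin dC × Fin dH,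
      ωS q.1 + ωC q.2.1 + ωH q.2.2 = ωS i → c ≤ g q := by
    intro q hEq
    have hZCle : ZC ≤ dC := by
      rw [hZC]
      calc ∑ j', Real.exp (-β * ωC j') ≤ ∑ _j' : Fin dC, (1:ℝ) :=
            Finset.sum_le_sum fun j _ => Real.exp_le_one_iff.mpr (by nlinarith [hωC j])
        _ = dC := by simp
    have hZHle : ZH ≤ dH := by
      rw [hZH]
      calc ∑ k', Real.exp (-βH * ωH k') ≤ ∑ _k' : Fin dH, (1:ℝ) :=
            Finset.sum_le_sum fun k _ => Real.exp_le_one_iff.mpr (by nlinarith [hωH k])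
        _ = dH := by simp
    have hexpH : Real.exp (-β * ωH q.2.2) ≤ Real.exp (-βH * ωH q.2.2) :=
      Real.exp_le_exp.mpr (by nlinarith [hωH q.2.2])
    have hnum : Real.exp (-β * ωS i)
        = Real.exp (-β * ωS q.1) * Real.exp (-β * ωC q.2.1) * Real.exp (-β * ωH q.2.2) := by
      rw [← Real.exp_add, ← Real.exp_add, ← hEq]; ring_nf
    have hgq : g q = Real.exp (-β * ωS q.1) * Real.exp (-β * ωC q.2.1)
        * Real.exp (-βH * ωH q.2.2) / (ZS * ZC * ZH) := by
      simp only [hg]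
      rw [div_mul_div_comm, div_mul_div_comm, ← mul_assoc, ← mul_assoc]
    rw [hc, hgq, hnum]
    refine div_le_div₀ (by positivity)
      (mul_le_mul_of_nonneg_left hexpH (by positivity)) (by positivity) ?_
    calc ZS * ZC * ZH ≤ ZS * dC * ZH :=
          mul_le_mul_of_nonneg_right (mul_le_mul_of_nonneg_left hZCle hZSpos.le) hZHpos.le
      _ ≤ ZS * dC * dH := mul_le_mul_of_nonneg_left hZHle (by positivity)
  -- lower bound on the excited row contribution
  have hF0 : c ≤ F (i, 0, 0) := by
    calc c = c * ∑ q, Complex.normSq (U (i, 0, 0) q) := by rw [hrow, mul_one]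
      _ = ∑ q, c * Complex.normSq (U (i, 0, 0) q) := Finset.mul_sum _ _ _
      _ ≤ F (i, 0, 0) := by
          refine Finset.sum_le_sum fun q _ => ?_
          by_cases hq : U (i, 0, 0) q = 0
          · rw [hq]; simp
          · exact mul_le_mul_of_nonneg_right (hglb q (hEC' q hq)) (Complex.normSq_nonneg _)
  -- main bound: ground-state population ≤ 1 - c
  have hmain : ∑ jk : Fin dC × Fin dH, F (0, jk) ≤ 1 - c := by
    have hsplit : (∑ jk : Fin dC × Fin dH, F ((0 : Fin dS), jk))
        + ∑ s ∈ Finset.univ.erase (0 : Fin dS), ∑ jk : Fin dC × Fin dH, F (s, jk) = 1 := by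
      rw [← hFtot]
      conv_rhs => rw [Fintype.sum_prod_type]
      exact Finset.add_sum_erase _ (fun s => ∑ jk : Fin dC × Fin dH, F (s, jk))
        (Finset.mem_univ _)
    have hrest : c ≤ ∑ s ∈ Finset.univ.erase (0 : Fin dS),
        ∑ jk : Fin dC × Fin dH, F (s, jk) := by
      calc c ≤ F (i, 0, 0) := hF0
        _ ≤ ∑ jk : Fin dC × Fin dH, F (i, jk) :=
            Finset.single_le_sum (fun jk _ => hFnn (i, jk)) (Finset.mem_univ ((0:Fin dC), (0:Fin dH)))
        _ ≤ _ := Finset.single_le_sum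
            (fun s _ => Finset.sum_nonneg fun jk _ => hFnn (s, jk))
            (Finset.mem_erase.mpr ⟨hi, Finset.mem_univ i⟩)
    linarith
  have hcge : Real.exp (-2 * β * ωS i) / (ZS * dC * dH) ≤ c := by
    rw [hc]
    exact div_le_div₀ (Real.exp_pos _).le (Real.exp_le_exp.mpr (by nlinarith [hωS i]))
      (by positivity) le_rfl
  calc (∑ jk : Fin dC × Fin dH,
          (U * ((Matrix.diagonal fun i' => ((Real.exp (-β * ωS i') / ZS : ℝ) : ℂ))
              ⊗ₖ ((Matrix.diagonal fun j => ((Real.exp (-β * ωC j) / ZC : ℝ) : ℂ))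
                ⊗ₖ (Matrix.diagonal fun k => ((Real.exp (-βH * ωH k) / ZH : ℝ) : ℂ)))) * Uᴴ)
            (0, jk) (0, jk)).re
      = ∑ jk : Fin dC × Fin dH, F (0, jk) := by
        rw [hD, Complex.re_sum]
        exact Finset.sum_congr rfl fun jk _ => hentry (0, jk)
    _ ≤ 1 - c := hmain
    _ ≤ 1 - Real.exp (-2 * β * ωS i) / (ZS * dC * dH) := by linarith
end

section
/- (Population-gap recursion bound for the finite-repetition incoherent protocol.) Let δ ∈ (0,1) and let p, q : ℕ → ℝ be sequences with p_0 = q_0 and p_n − q_n ≤ δ (p_{n−1} − q_n) for all n ≥ 1. Then for every n ≥ 1, p_n − q_n ≤ δ^n q_0 − δ q_n + (1−δ) δ ∑_{j=1}^{n−1} δ^{n−j−1} q_j. -/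
/-- Population-gap recursion bound for the finite-repetition incoherent
protocol. -/
theorem population_gap_recursion (δ : ℝ) (hδ0 : 0 < δ) (hδ1 : δ < 1)
    (p q : ℕ → ℝ) (h0 : p 0 = q 0)
    (hrec : ∀ n : ℕ, 1 ≤ n → p n - q n ≤ δ * (p (n - 1) - q n)) :
    ∀ n : ℕ, 1 ≤ n →
      p n - q n ≤ δ ^ n * q 0 - δ * q n
        + (1 - δ) * δ * ∑ j ∈ Finset.Icc 1 (n - 1), δ ^ (n - j - 1) * q j := by
  intro n hn
  induction n, hn using Nat.le_induction with
  | base =>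
    have h := hrec 1 le_rfl
    simp [h0] at h ⊢
    linarith
  | succ n hn ih =>
    obtain ⟨m, rfl⟩ : ∃ m, n = m + 1 := ⟨n - 1, by omega⟩
    have h := hrec (m + 2) (by omega)
    simp only [Nat.add_sub_cancel] at h ih ⊢
    have hsum : ∑ j ∈ Finset.Icc 1 (m + 1), δ ^ (m + 2 - j - 1) * q j
        = δ * ∑ j ∈ Finset.Icc 1 m, δ ^ (m + 1 - j - 1) * q j + q (m + 1) := by
      rw [Finset.sum_Icc_succ_top (by omega), Finset.mul_sum]
      have : ∀ j ∈ Finset.Icc 1 m,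
          δ ^ (m + 2 - j - 1) * q j = δ * (δ ^ (m + 1 - j - 1) * q j) := by
        intro j hj
        simp only [Finset.mem_Icc] at hj
        have : m + 2 - j - 1 = (m + 1 - j - 1) + 1 := by omega
        rw [this, pow_succ]
        ring
      rw [Finset.sum_congr rfl this]
      simp
    rw [hsum]
    have h2 : m + 2 - 1 = m + 1 := rfl
    rw [h2] at h
    have hmul := mul_le_mul_of_nonneg_left ih hδ0.le
    have hp : δ ^ (m + 2) = δ * δ ^ (m + 1) := by rw [pow_succ]; ring
    show p (m + 2) - q (m + 2) ≤ δ ^ (m + 2) * q 0 - δ * q (m + 2)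
        + (1 - δ) * δ * (δ * ∑ j ∈ Finset.Icc 1 m, δ ^ (m + 1 - j - 1) * q j + q (m + 1))
    have h' : δ * (p (m + 1) - q (m + 2))
        = δ * (p (m + 1) - q (m + 1)) + δ * q (m + 1) - δ * q (m + 2) := by ring
    have key : δ * (δ ^ (m + 1) * q 0 - δ * q (m + 1)
          + (1 - δ) * δ * ∑ x ∈ Finset.Icc 1 m, δ ^ (m + 1 - x - 1) * q x)
          + δ * q (m + 1) - δ * q (m + 2)
        = δ ^ (m + 2) * q 0 - δ * q (m + 2)
          + (1 - δ) * δ * (δ * ∑ j ∈ Finset.Icc 1 m, δ ^ (m + 1 - j - 1) * q j + q (m + 1)) := by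
      rw [hp]; ring
    linarith [h, h', hmul, key]
end

section
/- (Heat-cost difference between the finite-repetition and idealised incoherent protocols.) Let δ ∈ (0,1), θ > 0, N ≥ 1, and let p, q : {0,…,N} → ℝ satisfy p_0 = q_0, p_n − q_n ≤ δ (p_{n−1} − q_n) for all 1 ≤ n ≤ N, and 0 ≤ q_n ≤ p_n for all n. Then ∑_{n=1}^{N} nθ (p_{n−1} − p_n) ≤ ∑_{n=1}^{N} nθ (q_{n−1} − q_n) + θ q_0 δ N. -/
/-- Heat-cost difference between the finite-repetition and idealised
incoherent protocols. -/
theorem heat_cost_difference (δ θ : ℝ) (hδ0 : 0 < δ) (hδ1 : δ < 1) (hθ : 0 < θ)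
    (N : ℕ) (hN : 1 ≤ N) (p q : ℕ → ℝ) (h0 : p 0 = q 0)
    (hrec : ∀ n : ℕ, 1 ≤ n → n ≤ N → p n - q n ≤ δ * (p (n - 1) - q n))
    (hbound : ∀ n : ℕ, n ≤ N → 0 ≤ q n ∧ q n ≤ p n) :
    ∑ n ∈ Finset.Icc 1 N, (n : ℝ) * θ * (p (n - 1) - p n)
      ≤ (∑ n ∈ Finset.Icc 1 N, (n : ℝ) * θ * (q (n - 1) - q n)) + θ * q 0 * δ * N := by
  have hq0 : 0 ≤ q 0 := (hbound 0 (by omega)).1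
  have hpdec : ∀ n, 1 ≤ n → n ≤ N → p n ≤ p (n - 1) := by
    intro n h1 h2
    have h := hrec n h1 h2
    have hb := hbound n h2
    nlinarith [hb.1, hb.2]
  have hple : ∀ n, n ≤ N → p n ≤ q 0 := by
    intro n
    induction n with
    | zero => intro _; rw [h0]
    | succ m ih =>
      intro h
      have h1 : p (m + 1) ≤ p m := by
        have := hpdec (m + 1) (by omega) h
        simpa using this
      exact le_trans h1 (ih (by omega))
  have hf : ∀ n, 1 ≤ n → n ≤ N → p n - q n ≤ δ * q 0 := by
    intro n h1 h2
    have h := hrec n h1 h2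
    have hqn := (hbound n h2).1
    have hpn1 : p (n - 1) ≤ q 0 := hple (n - 1) (by omega)
    nlinarith
  have hfnn : ∀ n, n ≤ N → 0 ≤ p n - q n := by
    intro n h
    have := (hbound n h).2
    linarith
  have key : ∀ M : ℕ, 1 ≤ M →
      ∑ n ∈ Finset.Icc 1 M, (n : ℝ) * ((p (n - 1) - q (n - 1)) - (p n - q n))
        = (∑ n ∈ Finset.Icc 0 (M - 1), (p n - q n)) - (M : ℝ) * (p M - q M) := by
    intro M hM
    induction M, hM using Nat.le_induction with
    | base => simp
    | succ M hM ih =>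
      rw [Finset.sum_Icc_succ_top (by omega : 1 ≤ M + 1), ih]
      obtain ⟨K, rfl⟩ : ∃ K, M = K + 1 := ⟨M - 1, by omega⟩
      have h1 : K + 1 + 1 - 1 = K + 1 := by omega
      have h2 : K + 1 - 1 = K := by omega
      rw [h1, h2, Finset.sum_Icc_succ_top (Nat.zero_le (K + 1))]
      push_cast
      ring
  have eq1 : ∑ n ∈ Finset.Icc 1 N, (n : ℝ) * θ * (p (n - 1) - p n)
      - ∑ n ∈ Finset.Icc 1 N, (n : ℝ) * θ * (q (n - 1) - q n)
      = θ * ∑ n ∈ Finset.Icc 1 N, (n : ℝ) * ((p (n - 1) - q (n - 1)) - (p n - q n)) := by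
    rw [Finset.mul_sum, ← Finset.sum_sub_distrib]
    exact Finset.sum_congr rfl (fun n _ => by ring)
  have hbnd : ∑ n ∈ Finset.Icc 0 (N - 1), (p n - q n) ≤ (N : ℝ) * (δ * q 0) := by
    have hcard : (Finset.Icc 0 (N - 1)).card = N := by
      rw [Nat.card_Icc]; omega
    have := Finset.sum_le_card_nsmul (Finset.Icc 0 (N - 1)) (fun n => p n - q n) (δ * q 0)
      (by
        intro n hn
        simp only [Finset.mem_Icc] at hn
        rcases Nat.eq_zero_or_pos n with h | h
        · subst h
          nlinarith [mul_nonneg hδ0.le hq0]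
        · exact hf n h (by omega))
    rw [hcard, nsmul_eq_mul] at this
    exact this
  have hfN : 0 ≤ p N - q N := hfnn N le_rfl
  have hkey := key N hN
  have hNpos : (1 : ℝ) ≤ (N : ℝ) := by exact_mod_cast hN
  have hS : ∑ n ∈ Finset.Icc 1 N, (n : ℝ) * ((p (n - 1) - q (n - 1)) - (p n - q n))
      ≤ (N : ℝ) * (δ * q 0) := by
    rw [hkey]
    nlinarith [mul_nonneg (by linarith : (0:ℝ) ≤ (N:ℝ)) hfN]
  have h2 := mul_le_mul_of_nonneg_left hS hθ.le
  have h3 : θ * ((N : ℝ) * (δ * q 0)) = θ * q 0 * δ * N := by ring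
  linarith
end

section
/- (Riemann-sum sandwich for the idealised heat cost: Carnot–Landauer saturation.) Let d ≥ 1, ω : Fin d → ℝ, 0 ≤ β_H < β with β > 0, and set η := 1 − β_H/β. For q ≥ 0 define b(q) := β + q(β − β_H), p_k(q) := exp(−b(q) ω_k)/∑_j exp(−b(q) ω_j), the average energy x(q) := ∑_k ω_k p_k(q), the Shannon entropy S(q) := −∑_k p_k(q) log p_k(q), and the free energy F(q) := x(q) − S(q)/β. Then for every θ > 0 and every integer N ≥ 1: (1/η)(F(Nθ) − F(0)) ≤ ∑_{n=1}^{N} nθ (x((n−1)θ) − x(nθ)) ≤ (1/η)(F(Nθ) − F(0)) + θ (x(0) − x(Nθ)). -/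
/-- Inverse temperature along the protocol: `b(q) = β + q(β − β_H)`. -/
noncomputable def bTemp (β βH q : ℝ) : ℝ := β + q * (β - βH)

/-- Gibbs populations `p_k(q) = exp(−b(q) ωₖ) / ∑ⱼ exp(−b(q) ωⱼ)`. -/
noncomputable def popQ (d : ℕ) (ω : Fin d → ℝ) (β βH q : ℝ) (k : Fin d) : ℝ :=
  Real.exp (-(bTemp β βH q) * ω k) / ∑ j, Real.exp (-(bTemp β βH q) * ω j)

/-- Average energy `x(q) = ∑ₖ ωₖ p_k(q)`. -/
noncomputable def avgE (d : ℕ) (ω : Fin d → ℝ) (β βH q : ℝ) : ℝ :=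
  ∑ k, ω k * popQ d ω β βH q k

/-- Shannon entropy `S(q) = −∑ₖ p_k(q) log p_k(q)`. -/
noncomputable def entQ (d : ℕ) (ω : Fin d → ℝ) (β βH q : ℝ) : ℝ :=
  -∑ k, popQ d ω β βH q k * Real.log (popQ d ω β βH q k)

/-- Free energy `F(q) = x(q) − S(q)/β` w.r.t. the cold inverse temperature `β`. -/
noncomputable def freeE (d : ℕ) (ω : Fin d → ℝ) (β βH q : ℝ) : ℝ :=
  avgE d ω β βH q - entQ d ω β βH q / β

/-!
With `b = bTemp β βH q`, the log-partition function `log Z(b)` is convex in `b` with slope `-x`, and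
`F(q) / η = -q x(q) - log Z(b(q)) / (β - βH)`. Summation by parts turns the heat sum into
`∑_{i<N} θ x(iθ) - Nθ x(Nθ)`, so both inequalities reduce to comparing the left and right Riemann
sums `∑ θ x(iθ)`, `∑ θ x((i+1)θ)` with `(log Z(b(0)) - log Z(b(Nθ))) / (β - βH)`, which the tangent
lines of `log Z` at consecutive grid points provide.
-/

open Finset Real

namespace GibbsState

variable {ι : Type*} [Fintype ι] (ω : ι → ℝ)

noncomputable def partitionFunction (b : ℝ) : ℝ := ∑ k, exp (-b * ω k)

noncomputable def prob (b : ℝ) (k : ι) : ℝ := exp (-b * ω k) / partitionFunction ω b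

noncomputable def meanEnergy (b : ℝ) : ℝ := ∑ k, ω k * prob ω b k

lemma prob_nonneg (b : ℝ) (k : ι) : 0 ≤ prob ω b k :=
  div_nonneg (exp_pos _).le (sum_nonneg fun _ _ => (exp_pos _).le)

variable [Nonempty ι]

lemma partitionFunction_pos (b : ℝ) : 0 < partitionFunction ω b :=
  sum_pos (fun _ _ => exp_pos _) univ_nonempty

lemma sum_prob (b : ℝ) : ∑ k, prob ω b k = 1 := by
  simp only [prob, ← sum_div]
  exact div_self (partitionFunction_pos ω b).ne'

lemma log_prob (b : ℝ) (k : ι) :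
    log (prob ω b k) = -b * ω k - log (partitionFunction ω b) := by
  rw [prob, log_div (exp_ne_zero _) (partitionFunction_pos ω b).ne', log_exp]

lemma neg_sum_prob_mul_log_prob (b : ℝ) :
    -∑ k, prob ω b k * log (prob ω b k) = b * meanEnergy ω b + log (partitionFunction ω b) := by
  have hterm : ∀ k, prob ω b k * log (prob ω b k)
      = -b * (ω k * prob ω b k) - log (partitionFunction ω b) * prob ω b k := fun k => by
    rw [log_prob]; ring
  simp only [hterm, sum_sub_distrib, ← mul_sum, sum_prob, mul_one]
  rw [meanEnergy]
  ring

lemma partitionFunction_eq_mul_sum_prob_mul_exp (b b' : ℝ) :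
    partitionFunction ω b' = partitionFunction ω b * ∑ j, prob ω b j * exp (-(b' - b) * ω j) := by
  have hZ := (partitionFunction_pos ω b).ne'
  rw [mul_sum, partitionFunction]
  refine sum_congr rfl fun j _ => ?_
  rw [prob, div_mul_eq_mul_div, mul_div_cancel₀ _ hZ, ← exp_add]
  ring_nf

/-- The tangent line at `b` of the convex function `log ∘ partitionFunction ω`, whose slope there is
`-meanEnergy ω b`: Jensen's inequality for `exp` under the Gibbs weights at `b`. -/
lemma log_partitionFunction_sub_mul_meanEnergy_le (b b' : ℝ) :
    log (partitionFunction ω b) - (b' - b) * meanEnergy ω b ≤ log (partitionFunction ω b') := by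
  have hmean : -(b' - b) * meanEnergy ω b = ∑ j, prob ω b j * (-(b' - b) * ω j) := by
    rw [meanEnergy, mul_sum]
    exact sum_congr rfl fun j _ => by ring
  have jensen : exp (-(b' - b) * meanEnergy ω b)
      ≤ ∑ j, prob ω b j * exp (-(b' - b) * ω j) := by
    rw [hmean]
    simpa only [smul_eq_mul] using convexOn_exp.map_sum_le (t := univ)
      (fun j _ => prob_nonneg ω b j) (sum_prob ω b) (fun j _ => Set.mem_univ (-(b' - b) * ω j))
  have hlog := log_le_log (exp_pos _) jensen
  rw [log_exp] at hlog
  rw [partitionFunction_eq_mul_sum_prob_mul_exp ω b b',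
    log_mul (partitionFunction_pos ω b).ne' ((exp_pos _).trans_le jensen).ne']
  linarith

lemma sub_mul_meanEnergy_le_log_partitionFunction_sub (b b' : ℝ) :
    (b' - b) * meanEnergy ω b' ≤ log (partitionFunction ω b) - log (partitionFunction ω b') ∧
      log (partitionFunction ω b) - log (partitionFunction ω b') ≤ (b' - b) * meanEnergy ω b := by
  have h₁ := log_partitionFunction_sub_mul_meanEnergy_le ω b' b
  have h₂ := log_partitionFunction_sub_mul_meanEnergy_le ω b b'
  constructor <;> linarith

end GibbsState

open GibbsState

section Protocol

variable {d : ℕ} (ω : Fin d → ℝ) {β βH : ℝ}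

lemma avgE_eq_meanEnergy (q : ℝ) : avgE d ω β βH q = meanEnergy ω (bTemp β βH q) := rfl

lemma div_carnot_mul_freeE_eq [Nonempty (Fin d)] (hβ : β ≠ 0) (hβH : βH ≠ β) (q : ℝ) :
    (1 / (1 - βH / β)) * freeE d ω β βH q
      = -q * avgE d ω β βH q - log (partitionFunction ω (bTemp β βH q)) / (β - βH) := by
  have hS : entQ d ω β βH q
      = bTemp β βH q * avgE d ω β βH q + log (partitionFunction ω (bTemp β βH q)) :=
    neg_sum_prob_mul_log_prob ω _
  have hc : β - βH ≠ 0 := sub_ne_zero.mpr hβH.symm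
  rw [freeE, hS, bTemp, one_sub_div hβ]
  field_simp
  ring

lemma sub_mul_avgE_le_log_partitionFunction_sub [Nonempty (Fin d)] (hβH : βH < β) (q q' : ℝ) :
    (q' - q) * avgE d ω β βH q'
        ≤ (log (partitionFunction ω (bTemp β βH q))
            - log (partitionFunction ω (bTemp β βH q'))) / (β - βH) ∧
      (log (partitionFunction ω (bTemp β βH q))
            - log (partitionFunction ω (bTemp β βH q'))) / (β - βH)
        ≤ (q' - q) * avgE d ω β βH q := by
  have hc : 0 < β - βH := sub_pos.mpr hβH
  have hb : bTemp β βH q' - bTemp β βH q = (q' - q) * (β - βH) := by simp only [bTemp]; ring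
  obtain ⟨h₁, h₂⟩ := sub_mul_meanEnergy_le_log_partitionFunction_sub ω (bTemp β βH q) (bTemp β βH q')
  rw [hb] at h₁ h₂
  rw [le_div_iff₀ hc, div_le_iff₀ hc, avgE_eq_meanEnergy, avgE_eq_meanEnergy]
  constructor <;> linarith

end Protocol

lemma riemann_sum_sandwich (θ : ℝ) (g h : ℕ → ℝ)
    (hstep : ∀ i, θ * g (i + 1) ≤ h i - h (i + 1) ∧ h i - h (i + 1) ≤ θ * g i) (N : ℕ) :
    h 0 - h N ≤ ∑ i ∈ range N, θ * g i ∧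
      ∑ i ∈ range N, θ * g i ≤ h 0 - h N + θ * (g 0 - g N) := by
  have hh : ∑ i ∈ range N, (h i - h (i + 1)) = h 0 - h N := sum_range_sub' h N
  have hg : ∑ i ∈ range N, θ * g i - ∑ i ∈ range N, θ * g (i + 1) = θ * (g 0 - g N) := by
    rw [← mul_sum, ← mul_sum, ← mul_sub, ← sum_sub_distrib, sum_range_sub']
  have hlow := sum_le_sum fun i (_ : i ∈ range N) => (hstep i).2
  have hhigh := sum_le_sum fun i (_ : i ∈ range N) => (hstep i).1
  constructor <;> linarith

lemma sum_Icc_mul_sub_by_parts (g : ℝ → ℝ) (θ : ℝ) (N : ℕ) :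
    ∑ n ∈ Icc 1 N, (n : ℝ) * θ * (g (((n : ℝ) - 1) * θ) - g ((n : ℝ) * θ))
      = ∑ i ∈ range N, θ * g ((i : ℝ) * θ) - N * θ * g (N * θ) := by
  induction N with
  | zero => simp
  | succ m ih =>
    rw [sum_Icc_succ_top (by omega), ih, sum_range_succ]
    push_cast
    rw [add_sub_cancel_right]
    ring

theorem riemann_sandwich_carnot_landauer_general (d : ℕ) (hd : 1 ≤ d) (ω : Fin d → ℝ)
    (β βH : ℝ) (hβH : βH < β) (hβ : 0 < β)
    (θ : ℝ) (N : ℕ) :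
    (1 / (1 - βH / β)) * (freeE d ω β βH (N * θ) - freeE d ω β βH 0)
      ≤ ∑ n ∈ Finset.Icc 1 N, (n : ℝ) * θ *
          (avgE d ω β βH (((n : ℝ) - 1) * θ) - avgE d ω β βH ((n : ℝ) * θ)) ∧
    ∑ n ∈ Finset.Icc 1 N, (n : ℝ) * θ *
        (avgE d ω β βH (((n : ℝ) - 1) * θ) - avgE d ω β βH ((n : ℝ) * θ))
      ≤ (1 / (1 - βH / β)) * (freeE d ω β βH (N * θ) - freeE d ω β βH 0)
          + θ * (avgE d ω β βH 0 - avgE d ω β βH (N * θ)) := by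
  have : Nonempty (Fin d) := Fin.pos_iff_nonempty.mp hd
  set x := fun i : ℕ => avgE d ω β βH ((i : ℝ) * θ)
  set L := fun i : ℕ => log (partitionFunction ω (bTemp β βH ((i : ℝ) * θ))) / (β - βH)
  have hstep : ∀ i, θ * x (i + 1) ≤ L i - L (i + 1) ∧ L i - L (i + 1) ≤ θ * x i := fun i => by
    have h := sub_mul_avgE_le_log_partitionFunction_sub ω hβH (i * θ) ((i + 1 : ℕ) * θ)
    rw [sub_div, show ((i + 1 : ℕ) : ℝ) * θ - i * θ = θ by push_cast; ring] at h
    exact h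
  obtain ⟨hlow, hhigh⟩ := riemann_sum_sandwich θ x L hstep N
  have hF : (1 / (1 - βH / β)) * (freeE d ω β βH (N * θ) - freeE d ω β βH 0)
      = L 0 - L N - N * θ * x N := by
    rw [mul_sub, div_carnot_mul_freeE_eq ω hβ.ne' hβH.ne, div_carnot_mul_freeE_eq ω hβ.ne' hβH.ne]
    simp only [x, L, Nat.cast_zero, zero_mul]
    ring
  rw [sum_Icc_mul_sub_by_parts, hF]
  simp only [x, Nat.cast_zero, zero_mul] at hhigh hlow ⊢
  constructor <;> linarith

/-- Riemann-sum sandwich for the idealised heat cost: Carnot–Landauer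
saturation. -/
theorem riemann_sandwich_carnot_landauer (d : ℕ) (hd : 1 ≤ d) (ω : Fin d → ℝ)
    (β βH : ℝ) (hβH0 : 0 ≤ βH) (hβH : βH < β) (hβ : 0 < β)
    (θ : ℝ) (hθ : 0 < θ) (N : ℕ) (hN : 1 ≤ N) :
    (1 / (1 - βH / β)) * (freeE d ω β βH (N * θ) - freeE d ω β βH 0)
      ≤ ∑ n ∈ Finset.Icc 1 N, (n : ℝ) * θ *
          (avgE d ω β βH (((n : ℝ) - 1) * θ) - avgE d ω β βH ((n : ℝ) * θ)) ∧
    ∑ n ∈ Finset.Icc 1 N, (n : ℝ) * θ *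
        (avgE d ω β βH (((n : ℝ) - 1) * θ) - avgE d ω β βH ((n : ℝ) * θ))
      ≤ (1 / (1 - βH / β)) * (freeE d ω β βH (N * θ) - freeE d ω β βH 0)
          + θ * (avgE d ω β βH 0 - avgE d ω β βH (N * θ)) :=
  riemann_sandwich_carnot_landauer_general d hd ω β βH hβH hβ θ N
end

section
/- (Gaussian harmonic-oscillator protocol saturates the Landauer limit.) Let β > 0 and 0 < ω_S < ω_max. Define the mean occupation ē(ω) := e^{−βω}/(1 − e^{−βω}) and the thermal entropy S(ω) := β ω e^{−βω}/(1 − e^{−βω}) − log(1 − e^{−βω}). For each integer N ≥ 1 set ω_n := ω_S + n(ω_max − ω_S)/N for 0 ≤ n ≤ N. Then lim_{N→∞} ∑_{n=1}^{N} ω_n (ē(ω_{n−1}) − ē(ω_n)) = (1/β)(S(ω_S) − S(ω_max)). -/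
open Filter

/-- Mean occupation number of a thermal oscillator: `ē(ω) = e^{−βω}/(1 − e^{−βω})`. -/
noncomputable def meanOcc (β ω : ℝ) : ℝ := Real.exp (-β * ω) / (1 - Real.exp (-β * ω))

/-- Thermal entropy of an oscillator:
`S(ω) = βω e^{−βω}/(1 − e^{−βω}) − log(1 − e^{−βω})`. -/
noncomputable def oscEntropy (β ω : ℝ) : ℝ :=
  β * ω * Real.exp (-β * ω) / (1 - Real.exp (-β * ω)) - Real.log (1 - Real.exp (-β * ω))

/-!
Summation by parts turns the dissipated heat into `ω_S ē(ω_S) − ω_max ē(ω_max)` plus a left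
Riemann sum of `ē` over `[ω_S, ω_max]`. The occupation `ē` is decreasing and is the
`ω`-derivative of the free energy `F(ω) = β⁻¹ log(1 − e^{−βω})`, so the mean value theorem
squeezes the Riemann sum between `F(ω_max) − F(ω_S)` and the same plus `O(1/N)`. The limit is
then `β⁻¹ (S(ω_S) − S(ω_max))` by the thermodynamic identity `S = β (ω ē − F)`.
-/

open Set Topology

theorem Finset.sum_range_mul_sub_succ {R : Type*} [CommRing R] (u v : ℕ → R) (N : ℕ) :
    ∑ i ∈ Finset.range N, u (i + 1) * (v i - v (i + 1)) =
      u 0 * v 0 - u N * v N + ∑ i ∈ Finset.range N, (u (i + 1) - u i) * v i := by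
  induction N with
  | zero => simp
  | succ N ih => rw [Finset.sum_range_succ, Finset.sum_range_succ, ih]; ring

theorem AntitoneOn.image_sub_mem_Icc_of_hasDerivAt {F f : ℝ → ℝ} {x y : ℝ} (hxy : x ≤ y)
    (hF : ∀ z ∈ Icc x y, HasDerivAt F (f z) z) (hf : AntitoneOn f (Icc x y)) :
    F y - F x ∈ Icc (f y * (y - x)) (f x * (y - x)) := by
  rcases hxy.eq_or_lt with rfl | hlt
  · simp
  have hcont : ContinuousOn F (Icc x y) := fun z hz => (hF z hz).continuousAt.continuousWithinAt
  obtain ⟨c, hc, hslope⟩ := exists_hasDerivAt_eq_slope F f hlt hcont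
    (fun z hz => hF z (Ioo_subset_Icc_self hz))
  have hmvt : F y - F x = f c * (y - x) := by
    rw [hslope, div_mul_cancel₀ _ (sub_pos.2 hlt).ne']
  have hxy' := sub_nonneg.2 hxy
  rw [hmvt]
  exact ⟨mul_le_mul_of_nonneg_right
      (hf (Ioo_subset_Icc_self hc) (right_mem_Icc.2 hxy) hc.2.le) hxy',
    mul_le_mul_of_nonneg_right
      (hf (left_mem_Icc.2 hxy) (Ioo_subset_Icc_self hc) hc.1.le) hxy'⟩

noncomputable def uniformGrid (a b : ℝ) (N i : ℕ) : ℝ := a + i * (b - a) / N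

section uniformGrid

variable {a b : ℝ} {N : ℕ}

@[simp] theorem uniformGrid_zero : uniformGrid a b N 0 = a := by simp [uniformGrid]

theorem uniformGrid_self (hN : N ≠ 0) : uniformGrid a b N N = b := by
  rw [uniformGrid, mul_div_cancel_left₀ _ (Nat.cast_ne_zero.2 hN : (N : ℝ) ≠ 0)]; ring

theorem uniformGrid_succ_sub (i : ℕ) :
    uniformGrid a b N (i + 1) - uniformGrid a b N i = (b - a) / N := by
  simp only [uniformGrid]; push_cast; ring

theorem uniformGrid_mem_Icc (hab : a ≤ b) {i : ℕ} (hi : i ≤ N) :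
    uniformGrid a b N i ∈ Icc a b := by
  have hba := sub_nonneg.2 hab
  have hiN : (i : ℝ) / N ∈ Icc 0 1 :=
    ⟨by positivity, div_le_one_of_le₀ (Nat.cast_le.2 hi) N.cast_nonneg⟩
  have : uniformGrid a b N i = a + (i / N : ℝ) * (b - a) := by rw [uniformGrid]; ring
  rw [this]
  constructor <;> nlinarith [hiN.1, hiN.2]

end uniformGrid

section RiemannSum

variable {F f : ℝ → ℝ} {a b : ℝ}

theorem AntitoneOn.leftRiemannSum_mem_Icc (hab : a ≤ b)
    (hF : ∀ x ∈ Icc a b, HasDerivAt F (f x) x) (hf : AntitoneOn f (Icc a b))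
    {N : ℕ} (hN : N ≠ 0) :
    ∑ i ∈ Finset.range N, (b - a) / N * f (uniformGrid a b N i) ∈
      Icc (F b - F a) (F b - F a + (b - a) / N * (f a - f b)) := by
  set x := uniformGrid a b N
  set h := (b - a) / N
  have hstep : ∀ i ∈ Finset.range N,
      F (x (i + 1)) - F (x i) ∈ Icc (h * f (x (i + 1))) (h * f (x i)) := by
    intro i hi
    have hi := Finset.mem_range.1 hi
    have hsub : Icc (x i) (x (i + 1)) ⊆ Icc a b :=
      Icc_subset_Icc (uniformGrid_mem_Icc hab hi.le).1 (uniformGrid_mem_Icc hab hi).2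
    have hxx : x i ≤ x (i + 1) := by
      have := uniformGrid_succ_sub (a := a) (b := b) (N := N) i
      have : 0 ≤ h := div_nonneg (sub_nonneg.2 hab) N.cast_nonneg
      linarith
    have := hf.mono hsub |>.image_sub_mem_Icc_of_hasDerivAt hxx fun z hz => hF z (hsub hz)
    rwa [uniformGrid_succ_sub, mul_comm (f _), mul_comm (f _)] at this
  have hx0 : x 0 = a := uniformGrid_zero
  have hxN : x N = b := uniformGrid_self hN
  have htelescope : ∑ i ∈ Finset.range N, (F (x (i + 1)) - F (x i)) = F b - F a := by
    rw [Finset.sum_range_sub (fun i => F (x i)), hx0, hxN]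
  have hshift : ∑ i ∈ Finset.range N, h * f (x i) - ∑ i ∈ Finset.range N, h * f (x (i + 1)) =
      h * (f a - f b) := by
    rw [← Finset.sum_sub_distrib, Finset.sum_range_sub' (fun i => h * f (x i)), hx0, hxN, mul_sub]
  constructor
  · rw [← htelescope]; exact Finset.sum_le_sum fun i hi => (hstep i hi).2
  · have := Finset.sum_le_sum fun i hi => (hstep i hi).1
    linarith

theorem AntitoneOn.tendsto_leftRiemannSum (hab : a ≤ b)
    (hF : ∀ x ∈ Icc a b, HasDerivAt F (f x) x) (hf : AntitoneOn f (Icc a b)) :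
    Tendsto (fun N : ℕ => ∑ i ∈ Finset.range N, (b - a) / N * f (uniformGrid a b N i))
      atTop (𝓝 (F b - F a)) := by
  have herror : Tendsto (fun N : ℕ => F b - F a + (b - a) * (f a - f b) / N)
      atTop (𝓝 (F b - F a)) := by
    simpa using
      tendsto_const_nhds.add (tendsto_const_div_atTop_nhds_zero_nat ((b - a) * (f a - f b)))
  refine tendsto_of_tendsto_of_tendsto_of_le_of_le' tendsto_const_nhds herror ?_ ?_ <;>
    filter_upwards [eventually_ne_atTop 0] with N hN
  · exact (hf.leftRiemannSum_mem_Icc hab hF hN).1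
  · rw [mul_div_right_comm]; exact (hf.leftRiemannSum_mem_Icc hab hF hN).2

theorem AntitoneOn.tendsto_sum_mul_sub (hab : a ≤ b)
    (hF : ∀ x ∈ Icc a b, HasDerivAt F (f x) x) (hf : AntitoneOn f (Icc a b)) :
    Tendsto (fun N : ℕ => ∑ n ∈ Finset.Icc 1 N,
        (a + (n : ℝ) * (b - a) / N) *
          (f (a + ((n : ℝ) - 1) * (b - a) / N) - f (a + (n : ℝ) * (b - a) / N)))
      atTop (𝓝 (a * f a - b * f b + (F b - F a))) := by
  refine (tendsto_const_nhds.add (hf.tendsto_leftRiemannSum hab hF)).congr' ?_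
  filter_upwards [eventually_ne_atTop 0] with N hN
  set x := uniformGrid a b N
  have hreindex : ∑ n ∈ Finset.Icc 1 N,
      (a + (n : ℝ) * (b - a) / N) *
        (f (a + ((n : ℝ) - 1) * (b - a) / N) - f (a + (n : ℝ) * (b - a) / N)) =
      ∑ i ∈ Finset.range N, x (i + 1) * (f (x i) - f (x (i + 1))) := by
    rw [← Finset.Ico_add_one_right_eq_Icc, Finset.sum_Ico_eq_sum_range, add_tsub_cancel_right]
    refine Finset.sum_congr rfl fun i _ => ?_
    simp only [x, uniformGrid]
    push_cast
    ring_nf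
  have hx0 : x 0 = a := uniformGrid_zero
  have hxN : x N = b := uniformGrid_self hN
  rw [hreindex, Finset.sum_range_mul_sub_succ, hx0, hxN]
  simp only [x, uniformGrid_succ_sub]

end RiemannSum

noncomputable def oscFreeEnergy (β ω : ℝ) : ℝ := β⁻¹ * Real.log (1 - Real.exp (-β * ω))

section Oscillator

variable {β ω : ℝ}

theorem meanOcc_eq_inv_exp_sub_one : meanOcc β ω = (Real.exp (β * ω) - 1)⁻¹ := by
  rw [meanOcc, neg_mul, Real.exp_neg]
  field_simp

theorem meanOcc_antitoneOn (hβ : 0 < β) : AntitoneOn (meanOcc β) (Ioi 0) := by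
  intro x hx y hy hxy
  rw [meanOcc_eq_inv_exp_sub_one, meanOcc_eq_inv_exp_sub_one]
  have hx1 : 0 < Real.exp (β * x) - 1 := sub_pos.2 (Real.one_lt_exp_iff.2 (mul_pos hβ hx))
  exact inv_anti₀ hx1 (by gcongr)

theorem hasDerivAt_oscFreeEnergy (hβ : β ≠ 0) (hω : ω ≠ 0) :
    HasDerivAt (oscFreeEnergy β) (meanOcc β ω) ω := by
  have hne : 1 - Real.exp (-β * ω) ≠ 0 := by
    rw [sub_ne_zero, ne_comm, Ne, Real.exp_eq_one_iff]; exact mul_ne_zero (neg_ne_zero.2 hβ) hω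
  have hexp : HasDerivAt (fun x => 1 - Real.exp (-β * x)) (β * Real.exp (-β * ω)) ω := by
    refine (((hasDerivAt_id ω).const_mul (-β)).exp.const_sub 1).congr_deriv ?_
    simp only [id, mul_one]
    ring
  refine ((hexp.log hne).const_mul β⁻¹).congr_deriv ?_
  rw [meanOcc]
  field_simp

theorem oscEntropy_eq_mul_sub (hβ : β ≠ 0) :
    oscEntropy β ω = β * (ω * meanOcc β ω - oscFreeEnergy β ω) := by
  rw [oscEntropy, meanOcc, oscFreeEnergy]; field_simp

end Oscillator

/-- Gaussian harmonic-oscillator protocol saturates the Landauer limit. -/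
theorem gaussian_oscillator_landauer (β ωS ωmax : ℝ)
    (hβ : 0 < β) (hωS : 0 < ωS) (h : ωS < ωmax) :
    Tendsto (fun N : ℕ =>
        ∑ n ∈ Finset.Icc 1 N,
          (ωS + (n : ℝ) * (ωmax - ωS) / N) *
            (meanOcc β (ωS + ((n : ℝ) - 1) * (ωmax - ωS) / N)
              - meanOcc β (ωS + (n : ℝ) * (ωmax - ωS) / N)))
      atTop (nhds ((1 / β) * (oscEntropy β ωS - oscEntropy β ωmax))) := by
  have hpos : Icc ωS ωmax ⊆ Ioi 0 := fun ω hω => hωS.trans_le hω.1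
  have hfree : ∀ ω ∈ Icc ωS ωmax, HasDerivAt (oscFreeEnergy β) (meanOcc β ω) ω :=
    fun ω hω => hasDerivAt_oscFreeEnergy hβ.ne' (hpos hω).ne'
  convert ((meanOcc_antitoneOn hβ).mono hpos).tendsto_sum_mul_sub h.le hfree using 2
  rw [oscEntropy_eq_mul_sub hβ.ne', oscEntropy_eq_mul_sub hβ.ne']
  field_simp
  ring
end

section
/- (The non-Gaussian finite-control-complexity oscillator protocol strictly exceeds the Landauer limit.) For every s > 0, writing x := e^{−s}, the strict inequality s·x(2+x)/(1−x)² > s/(1−x) + log(x/(1−x)) holds. -/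
/-!
With `x = e^{-s} ∈ (0, 1)` and `log x = -s`, the heat minus the entropy decrease equals
`s·x(1+2x)/(1-x)² + log(1-x)`. Since `-log(1-x) ≤ x/(1-x)` (from `log y ≥ 1 - 1/y`) and
`1 - x < s` (from `e^{-s} > 1 - s`), this exceeds `x/(1-x)·((1+2x) - 1) > 0`.
-/

open Real

lemma Real.neg_log_one_sub_le_div {x : ℝ} (hx : x < 1) : -log (1 - x) ≤ x / (1 - x) := by
  have h1x : 0 < 1 - x := by linarith
  have hlog := one_sub_inv_le_log_of_pos h1x
  have hinv : (1 - x)⁻¹ - 1 = x / (1 - x) := by field_simp; ring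
  linarith

lemma div_one_sub_add_log_div_one_sub {x : ℝ} (s : ℝ) (hx0 : x ≠ 0) (hx1 : x ≠ 1) :
    s / (1 - x) + log (x / (1 - x)) = s * x / (1 - x) + (s + log x) - log (1 - x) := by
  have h1x : 1 - x ≠ 0 := sub_ne_zero.mpr hx1.symm
  rw [log_div hx0 h1x]
  field_simp
  ring

lemma mul_two_add_div_one_sub_sq {x : ℝ} (s : ℝ) (hx1 : x ≠ 1) :
    s * (x * (2 + x)) / (1 - x) ^ 2 = s * x / (1 - x) + s * x * (1 + 2 * x) / (1 - x) ^ 2 := by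
  have h1x : 1 - x ≠ 0 := sub_ne_zero.mpr hx1.symm
  field_simp
  ring

lemma neg_log_one_sub_lt_of_one_sub_lt {x s : ℝ} (hx0 : 0 < x) (hx1 : x < 1) (hs : 1 - x < s) :
    -log (1 - x) < s * x * (1 + 2 * x) / (1 - x) ^ 2 := by
  have h1x : 0 < 1 - x := by linarith
  calc -log (1 - x) ≤ x / (1 - x) := neg_log_one_sub_le_div hx1
    _ = (1 - x) * x / (1 - x) ^ 2 := by field_simp
    _ < s * x * (1 + 2 * x) / (1 - x) ^ 2 := by
        gcongr ?_ / _
        nlinarith [mul_pos hx0 hx0, mul_pos (mul_pos hx0 hx0) (h1x.trans hs)]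

/-- The non-Gaussian finite-control-complexity oscillator protocol strictly
exceeds the Landauer limit: for all `s > 0`, with `x = e^{−s}`,
`s·x(2+x)/(1−x)² > s/(1−x) + log(x/(1−x))`. -/
theorem nongaussian_protocol_exceeds_landauer (s : ℝ) (hs : 0 < s) :
    s / (1 - Real.exp (-s))
        + Real.log (Real.exp (-s) / (1 - Real.exp (-s)))
      < s * (Real.exp (-s) * (2 + Real.exp (-s))) / (1 - Real.exp (-s)) ^ 2 := by
  set x := exp (-s)
  have hx0 : 0 < x := exp_pos _
  have hx1 : x < 1 := exp_lt_one_iff.mpr (neg_neg_of_pos hs)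
  have hsx : 1 - x < s := by linarith [one_sub_lt_exp_neg hs.ne']
  have hlogx : log x = -s := log_exp _
  rw [div_one_sub_add_log_div_one_sub s hx0.ne' hx1.ne, mul_two_add_div_one_sub_sq s hx1.ne,
    hlogx]
  linarith [neg_log_one_sub_lt_of_one_sub_lt hx0 hx1 hsx]
end

section
/- (Optimal cooling population: Ky Fan–type characterisation.) Let ρ_S and ρ_M be density matrices on ℂ^{d_S} and ℂ^{d_M}, and let P := |e_0⟩⟨e_0| ⊗ I_{d_M} be the projector onto the ground-level subspace of the first factor (e_0 the first standard basis vector). Then the maximum over unitaries U on ℂ^{d_S} ⊗ ℂ^{d_M} of Tr[P · U (ρ_S ⊗ ρ_M) U†] is attained and equals the sum of the d_M largest eigenvalues (counted with multiplicity) of ρ_S ⊗ ρ_M. -/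
/-!
Diagonalise `A = ρ_S ⊗ ρ_M = V D V†`. For a unitary `U` put `W = U V`; the ground-level
population of `U A U†` is `∑ₖ λₖ cₖ` with weights `cₖ = ∑_b |W_{(0,b),k}|²`. Since the rows and
columns of `W` are unit vectors, `0 ≤ cₖ ≤ 1` and `∑ₖ cₖ = d_M`, and any such weighting of the
eigenvalues is at most the sum of the `d_M` largest ones. Equality holds when `U` is `V†` with its
rows permuted so that the eigenvectors of the `d_M` largest eigenvalues land on the ground level.
-/

open scoped Kronecker ComplexOrder
open Matrix

/-- Eigenvalues of a matrix (junk value `0` if the matrix is not Hermitian). -/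
noncomputable def eigsOf {n : Type*} [Fintype n] [DecidableEq n] (A : Matrix n n ℂ) : n → ℝ :=
  if h : A.IsHermitian then h.eigenvalues else 0

/-- The sum of the `m` largest eigenvalues (with multiplicity) of a matrix: sort the
multiset of eigenvalues in nonincreasing order and sum the first `m` entries. -/
noncomputable def sumLargestEigs {n : Type*} [Fintype n] [DecidableEq n]
    (A : Matrix n n ℂ) (m : ℕ) : ℝ :=
  (((Multiset.map (eigsOf A) Finset.univ.val).sort (· ≤ ·)).reverse.take m).sum

open Finset

theorem Antitone.reverse_sort_map_univ_eq_ofFn {α : Type*} [LinearOrder α] {N : ℕ} {v : Fin N → α}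
    (hv : Antitone v) : ((Multiset.map v univ.val).sort (· ≤ ·)).reverse = List.ofFn v := by
  refine List.Perm.eq_of_sortedGE ?_ hv.sortedGE_ofFn ?_
  · rw [List.sortedGE_reverse, List.sortedLE_iff_pairwise]
    exact Multiset.pairwise_sort _ _
  · rw [← Multiset.coe_eq_coe, Multiset.coe_reverse, Multiset.sort_eq, Fin.univ_val_map]

theorem sum_mul_le_sum_of_le_one_of_sum_eq_card {ι : Type*} [Fintype ι] {v c : ι → ℝ}
    (T : Finset ι) (hT : ∀ i ∈ T, ∀ j ∉ T, v j ≤ v i) (hc₀ : ∀ i, 0 ≤ c i)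
    (hc₁ : ∀ i, c i ≤ 1) (hc : ∑ i, c i = #T) : ∑ i, v i * c i ≤ ∑ i ∈ T, v i := by
  classical
  obtain ⟨t, hvT, hvTc⟩ : ∃ t, (∀ i ∈ T, t ≤ v i) ∧ ∀ j ∉ T, v j ≤ t := by
    rcases Tᶜ.eq_empty_or_nonempty with hTc | hTc
    · obtain ⟨t, ht⟩ := (T.image v).bddBelow
      exact ⟨t, fun i hi => ht (mem_coe.2 (mem_image_of_mem v hi)),
        fun j hj => absurd (mem_compl.2 hj) (by simp [hTc])⟩
    · exact ⟨Tᶜ.sup' hTc v, fun i hi => sup'_le hTc v fun j hj => hT i hi j (mem_compl.1 hj),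
        fun j hj => le_sup' v (mem_compl.2 hj)⟩
  -- termwise `(v i - t) (c i - 1) ≤ 0` on `T` and `(v i - t) c i ≤ 0` off `T`; the `t`-terms
  -- cancel in the sum because `∑ i, c i = #T`
  calc ∑ i, v i * c i
      ≤ ∑ i, ((if i ∈ T then v i else 0) + t * (c i - if i ∈ T then 1 else 0)) := by
        gcongr with i
        split_ifs with hi
        · nlinarith [hvT i hi, hc₁ i]
        · nlinarith [hvTc i hi, hc₀ i]
    _ = ∑ i ∈ T, v i := by
        simp [sum_add_distrib, ← mul_sum, sum_sub_distrib, hc]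

namespace Matrix

noncomputable def groundPopulation {m n : Type*} [Fintype m] [DecidableEq m] [Fintype n]
    [DecidableEq n] (i₀ : m) (M : Matrix (m × n) (m × n) ℂ) : ℝ :=
  (trace ((single i₀ i₀ (1 : ℂ) ⊗ₖ (1 : Matrix n n ℂ)) * M)).re

theorem groundPopulation_eq_sum {m n : Type*} [Fintype m] [DecidableEq m] [Fintype n]
    [DecidableEq n] (i₀ : m) (M : Matrix (m × n) (m × n) ℂ) :
    groundPopulation i₀ M = ∑ b, (M (i₀, b) (i₀, b)).re := by
  simp [groundPopulation, trace, mul_apply, kroneckerMap_apply, single, one_apply,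
    Fintype.sum_prod_type, ite_and, Complex.re_sum]

variable {ι : Type*} [Fintype ι] [DecidableEq ι]

theorem re_mul_diagonal_mul_conjTranspose_apply_self (W : Matrix ι ι ℂ) (d : ι → ℝ) (p : ι) :
    ((W * diagonal (RCLike.ofReal ∘ d : ι → ℂ) * Wᴴ) p p).re
      = ∑ k, d k * Complex.normSq (W p k) := by
  rw [mul_apply, Complex.re_sum]
  refine sum_congr rfl fun k _ => ?_
  simp only [mul_diagonal, conjTranspose_apply, Function.comp_apply, Complex.star_def]
  rw [mul_right_comm, Complex.mul_conj, mul_comm]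
  exact Complex.re_ofReal_mul _ _

theorem sum_normSq_row_eq_one {W : Matrix ι ι ℂ} (hW : W ∈ unitaryGroup ι ℂ) (p : ι) :
    ∑ k, Complex.normSq (W p k) = 1 := by
  have h := re_mul_diagonal_mul_conjTranspose_apply_self W 1 p
  simp only [Pi.one_apply, one_mul] at h
  rw [← h, ← star_eq_conjTranspose]
  simp [mem_unitaryGroup_iff.mp hW]

theorem sum_normSq_col_eq_one {W : Matrix ι ι ℂ} (hW : W ∈ unitaryGroup ι ℂ) (k : ι) :
    ∑ p, Complex.normSq (W p k) = 1 := by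
  simpa [star_apply] using sum_normSq_row_eq_one (Unitary.star_mem hW) k

theorem submatrix_mem_unitaryGroup {U : Matrix ι ι ℂ} (hU : U ∈ unitaryGroup ι ℂ) (π : ι ≃ ι) :
    U.submatrix π id ∈ unitaryGroup ι ℂ := by
  rw [mem_unitaryGroup_iff, star_eq_conjTranspose, conjTranspose_submatrix,
    ← submatrix_mul _ _ _ id _ Function.bijective_id, ← star_eq_conjTranspose,
    mem_unitaryGroup_iff.mp hU, submatrix_one_equiv]

namespace IsHermitian

theorem eigenvalues_equivOfCardEq {A : Matrix ι ι ℂ} (hA : A.IsHermitian)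
    (i : Fin (Fintype.card ι)) :
    hA.eigenvalues (Fintype.equivOfCardEq (Fintype.card_fin _) i) = hA.eigenvalues₀ i := by
  simp [eigenvalues]

theorem sumLargestEigs_eq {A : Matrix ι ι ℂ} (hA : A.IsHermitian) {m : ℕ}
    (hm : m ≤ Fintype.card ι) :
    sumLargestEigs A m = ∑ i : Fin m, hA.eigenvalues₀ (Fin.castLE hm i) := by
  have hmap : Multiset.map (eigsOf A) univ.val = Multiset.map hA.eigenvalues₀ univ.val := by
    rw [eigsOf, dif_pos hA,
      ← Multiset.map_univ_val_equiv (Fintype.equivOfCardEq (Fintype.card_fin _)),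
      Multiset.map_map]
    exact Multiset.map_congr rfl fun i _ => hA.eigenvalues_equivOfCardEq i
  rw [sumLargestEigs, hmap, hA.eigenvalues₀_antitone.reverse_sort_map_univ_eq_ofFn,
    ← Fin.ofFn_take_eq_take_ofFn hm, List.sum_ofFn]
  rfl

theorem re_conj_apply_self {A : Matrix ι ι ℂ} (hA : A.IsHermitian) (U : Matrix ι ι ℂ) (p : ι) :
    ((U * A * Uᴴ) p p).re
      = ∑ k, hA.eigenvalues k * Complex.normSq ((U * hA.eigenvectorUnitary) p k) := by
  rw [← re_mul_diagonal_mul_conjTranspose_apply_self]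
  conv_lhs => rw [hA.spectral_theorem, Unitary.conjStarAlgAut_apply]
  simp only [← star_eq_conjTranspose, star_mul, Matrix.mul_assoc]

theorem submatrix_star_eigenvectorUnitary_conj {A : Matrix ι ι ℂ} (hA : A.IsHermitian)
    (π : ι ≃ ι) :
    (star (hA.eigenvectorUnitary : Matrix ι ι ℂ)).submatrix π id * A
        * ((star (hA.eigenvectorUnitary : Matrix ι ι ℂ)).submatrix π id)ᴴ
      = diagonal (RCLike.ofReal ∘ hA.eigenvalues ∘ π) := by
  have hdiag : star (hA.eigenvectorUnitary : Matrix ι ι ℂ) * A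
        * (hA.eigenvectorUnitary : Matrix ι ι ℂ) = diagonal (RCLike.ofReal ∘ hA.eigenvalues) :=
    (Unitary.conjStarAlgAut_star_apply ..).symm.trans hA.conjStarAlgAut_star_eigenvectorUnitary
  rw [conjTranspose_submatrix, ← star_eq_conjTranspose, star_star, ← Function.comp_assoc,
    ← submatrix_diagonal_equiv, ← hdiag, submatrix_mul _ _ π id π Function.bijective_id,
    submatrix_mul _ _ π id id Function.bijective_id, submatrix_id_id]

variable {m n : Type*} [Fintype m] [DecidableEq m] [Fintype n] [DecidableEq n]

theorem groundPopulation_conj_eq {A : Matrix (m × n) (m × n) ℂ} (hA : A.IsHermitian) (i₀ : m)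
    (U : Matrix (m × n) (m × n) ℂ) :
    groundPopulation i₀ (U * A * Uᴴ) = ∑ k, hA.eigenvalues k *
      ∑ b, Complex.normSq ((U * hA.eigenvectorUnitary) (i₀, b) k) := by
  simp only [groundPopulation_eq_sum, hA.re_conj_apply_self, mul_sum]
  exact sum_comm

theorem groundPopulation_conj_le {A : Matrix (m × n) (m × n) ℂ} (hA : A.IsHermitian) (i₀ : m)
    {U : Matrix (m × n) (m × n) ℂ} (hU : U ∈ unitaryGroup (m × n) ℂ) :
    groundPopulation i₀ (U * A * Uᴴ) ≤ sumLargestEigs A (Fintype.card n) := by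
  set W := U * (hA.eigenvectorUnitary : Matrix (m × n) (m × n) ℂ)
  have hW : W ∈ unitaryGroup (m × n) ℂ := mul_mem hU hA.eigenvectorUnitary.2
  set c : m × n → ℝ := fun k => ∑ b, Complex.normSq (W (i₀, b) k)
  set κ := Fintype.equivOfCardEq (α := Fin (Fintype.card (m × n))) (Fintype.card_fin _)
  have hcard : Fintype.card n ≤ Fintype.card (m × n) := by
    rw [Fintype.card_prod]; exact Nat.le_mul_of_pos_left _ (Fintype.card_pos_iff.mpr ⟨i₀⟩)
  have hval : groundPopulation i₀ (U * A * Uᴴ) = ∑ i, hA.eigenvalues₀ i * c (κ i) := by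
    rw [hA.groundPopulation_conj_eq, ← Equiv.sum_comp κ]
    exact sum_congr rfl fun i _ => by rw [hA.eigenvalues_equivOfCardEq]
  rw [hval, hA.sumLargestEigs_eq hcard, ← Fin.coe_castLEEmb, ← sum_map univ]
  refine sum_mul_le_sum_of_le_one_of_sum_eq_card _ ?_ (fun k => ?_) (fun k => ?_) ?_
  · intro i hi j hj
    obtain ⟨b, -, rfl⟩ := mem_map.1 hi
    refine hA.eigenvalues₀_antitone (Fin.le_def.2 ?_)
    by_contra! h
    exact hj (mem_map.2 ⟨⟨j, h.trans b.2⟩, mem_univ _, Fin.ext rfl⟩)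
  · exact sum_nonneg fun b _ => Complex.normSq_nonneg _
  · calc c (κ k) ≤ ∑ a, ∑ b, Complex.normSq (W (a, b) (κ k)) :=
          single_le_sum (f := fun a => ∑ b, Complex.normSq (W (a, b) (κ k)))
            (fun a _ => sum_nonneg fun b _ => Complex.normSq_nonneg _) (mem_univ i₀)
      _ = 1 := by rw [← Fintype.sum_prod_type', sum_normSq_col_eq_one hW]
  · rw [Equiv.sum_comp κ c, card_map, card_univ, Fintype.card_fin, sum_comm]
    simp [sum_normSq_row_eq_one hW]

theorem exists_groundPopulation_conj_eq {dS dM : ℕ} [NeZero dS]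
    {A : Matrix (Fin dS × Fin dM) (Fin dS × Fin dM) ℂ} (hA : A.IsHermitian) :
    ∃ U ∈ unitaryGroup (Fin dS × Fin dM) ℂ,
      groundPopulation 0 (U * A * Uᴴ) = sumLargestEigs A dM := by
  have hcard : dS * dM = Fintype.card (Fin dS × Fin dM) := by simp
  have hm : dM ≤ Fintype.card (Fin dS × Fin dM) :=
    hcard ▸ Nat.le_mul_of_pos_left dM (NeZero.pos dS)
  -- `finProdFinEquiv (0, b) = b`, so `π` sends the ground level to the `dM` largest eigenvalues
  let π : Fin dS × Fin dM ≃ Fin dS × Fin dM :=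
    (finProdFinEquiv.trans (finCongr hcard)).trans (Fintype.equivOfCardEq (Fintype.card_fin _))
  refine ⟨_, submatrix_mem_unitaryGroup (Unitary.star_mem hA.eigenvectorUnitary.2) π, ?_⟩
  rw [hA.submatrix_star_eigenvectorUnitary_conj, groundPopulation_eq_sum, hA.sumLargestEigs_eq hm]
  refine sum_congr rfl fun b _ => ?_
  have hπ : finCongr hcard (finProdFinEquiv (0, b)) = Fin.castLE hm b := Fin.ext (by simp)
  simp [π, hπ, hA.eigenvalues_equivOfCardEq]

end IsHermitian

end Matrix

theorem optimal_cooling_kyfan_general (dS dM : ℕ) [NeZero dS]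
    (ρS : Matrix (Fin dS) (Fin dS) ℂ) (hρS : ρS.PosSemidef)
    (ρM : Matrix (Fin dM) (Fin dM) ℂ) (hρM : ρM.PosSemidef) :
    IsGreatest
      {t : ℝ | ∃ U ∈ Matrix.unitaryGroup (Fin dS × Fin dM) ℂ,
        t = (Matrix.trace
          ((Matrix.single (0 : Fin dS) (0 : Fin dS) (1 : ℂ)
              ⊗ₖ (1 : Matrix (Fin dM) (Fin dM) ℂ))
            * (U * (ρS ⊗ₖ ρM) * Uᴴ))).re}
      (sumLargestEigs (ρS ⊗ₖ ρM) dM) := by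
  have hA : (ρS ⊗ₖ ρM).IsHermitian := (hρS.kronecker hρM).isHermitian
  obtain ⟨U, hU, hUeq⟩ := hA.exists_groundPopulation_conj_eq
  refine ⟨⟨U, hU, hUeq.symm⟩, ?_⟩
  rintro _ ⟨V, hV, rfl⟩
  have hle := hA.groundPopulation_conj_le 0 hV
  rwa [Fintype.card_fin] at hle

/-- Optimal cooling population: Ky Fan–type characterisation: the maximal
ground-level population `Tr[P U (ρ_S ⊗ ρ_M) U†]` over all unitaries `U` is attained and
equals the sum of the `d_M` largest eigenvalues of `ρ_S ⊗ ρ_M`. -/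
theorem optimal_cooling_kyfan (dS dM : ℕ) [NeZero dS] [NeZero dM]
    (ρS : Matrix (Fin dS) (Fin dS) ℂ) (hρS : ρS.PosSemidef) (hρStr : ρS.trace = 1)
    (ρM : Matrix (Fin dM) (Fin dM) ℂ) (hρM : ρM.PosSemidef) (hρMtr : ρM.trace = 1) :
    IsGreatest
      {t : ℝ | ∃ U ∈ Matrix.unitaryGroup (Fin dS × Fin dM) ℂ,
        t = (Matrix.trace
          ((Matrix.single (0 : Fin dS) (0 : Fin dS) (1 : ℂ)
              ⊗ₖ (1 : Matrix (Fin dM) (Fin dM) ℂ))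
            * (U * (ρS ⊗ₖ ρM) * Uᴴ))).re}
      (sumLargestEigs (ρS ⊗ₖ ρM) dM) :=
  optimal_cooling_kyfan_general dS dM ρS hρS ρM hρM
end

section
/- (Machine replacement lemma: a finitely supported interaction sees only a finite machine.) Let d_S, a, b be positive integers, let ρ_S be a density matrix on ℂ^{d_S}, let ρ_A be an a×a positive semidefinite matrix and ρ_B a b×b positive semidefinite matrix with Tr ρ_A + Tr ρ_B = 1, and let ρ_M := ρ_A ⊕ ρ_B be the corresponding block-diagonal density matrix on ℂ^{a+b}. Let U_A be a unitary on ℂ^{d_S} ⊗ ℂ^{a}, and let U be the unitary on ℂ^{d_S} ⊗ ℂ^{a+b} that, under the decomposition ℂ^{d_S} ⊗ ℂ^{a+b} ≅ (ℂ^{d_S} ⊗ ℂ^{a}) ⊕ (ℂ^{d_S} ⊗ ℂ^{b}), equals U_A ⊕ Id. Then Tr_M[U (ρ_S ⊗ ρ_M) U†] = Tr_{ℂ^a}[U_A (ρ_S ⊗ ρ_A) U_A†] + (Tr ρ_B) · ρ_S. -/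
open scoped Kronecker ComplexOrder
open Matrix

/-- The extension `U_A ⊕ Id` of a unitary `U_A` on `ℂ^{d_S} ⊗ ℂ^a` to
`ℂ^{d_S} ⊗ (ℂ^a ⊕ ℂ^b) ≅ (ℂ^{d_S} ⊗ ℂ^a) ⊕ (ℂ^{d_S} ⊗ ℂ^b)`, acting as the identity
on the second block. -/
noncomputable def extendBlockU {dS a b : ℕ}
    (UA : Matrix (Fin dS × Fin a) (Fin dS × Fin a) ℂ) :
    Matrix (Fin dS × (Fin a ⊕ Fin b)) (Fin dS × (Fin a ⊕ Fin b)) ℂ :=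
  Matrix.of fun p q =>
    match p, q with
    | (i, Sum.inl j), (i', Sum.inl j') => UA (i, j) (i', j')
    | (i, Sum.inr k), (i', Sum.inr k') => if i = i' ∧ k = k' then 1 else 0
    | _, _ => 0

/-- Machine replacement lemma: a finitely supported interaction sees only
a finite machine. -/
theorem machine_replacement (dS a b : ℕ) (hdS : 0 < dS) (ha : 0 < a) (hb : 0 < b)
    (ρS : Matrix (Fin dS) (Fin dS) ℂ) (hρS : ρS.PosSemidef) (hρStr : ρS.trace = 1)
    (ρA : Matrix (Fin a) (Fin a) ℂ) (hρA : ρA.PosSemidef)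
    (ρB : Matrix (Fin b) (Fin b) ℂ) (hρB : ρB.PosSemidef)
    (htr : ρA.trace + ρB.trace = 1)
    (UA : Matrix (Fin dS × Fin a) (Fin dS × Fin a) ℂ)
    (hUA : UA ∈ Matrix.unitaryGroup (Fin dS × Fin a) ℂ) :
    ptrR ((extendBlockU (b := b) UA)
        * (ρS ⊗ₖ (Matrix.fromBlocks ρA 0 0 ρB))
        * (extendBlockU (b := b) UA)ᴴ)
      = ptrR (UA * (ρS ⊗ₖ ρA) * UAᴴ) + ρB.trace • ρS := by
  set e : Fin dS × (Fin a ⊕ Fin b) ≃ (Fin dS × Fin a) ⊕ (Fin dS × Fin b) :=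
    Equiv.prodSumDistrib (Fin dS) (Fin a) (Fin b) with he
  have eU : extendBlockU (b := b) UA =
      (Matrix.fromBlocks UA 0 0 (1 : Matrix (Fin dS × Fin b) (Fin dS × Fin b) ℂ)).submatrix e e := by
    ext ⟨i, j⟩ ⟨i', j'⟩
    rcases j with j | j <;> rcases j' with j' | j' <;>
      simp [extendBlockU, he, Matrix.one_apply, Prod.ext_iff]
  have eσ : ρS ⊗ₖ (Matrix.fromBlocks ρA 0 0 ρB) =
      (Matrix.fromBlocks (ρS ⊗ₖ ρA) 0 0 (ρS ⊗ₖ ρB)).submatrix e e := by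
    ext ⟨i, j⟩ ⟨i', j'⟩
    rcases j with j | j <;> rcases j' with j' | j' <;> simp [he]
  rw [eU, eσ, Matrix.conjTranspose_submatrix, Matrix.submatrix_mul_equiv,
    Matrix.submatrix_mul_equiv, Matrix.fromBlocks_conjTranspose]
  simp only [Matrix.fromBlocks_multiply, Matrix.conjTranspose_zero, Matrix.conjTranspose_one,
    Matrix.mul_zero, Matrix.zero_mul, Matrix.mul_one, Matrix.one_mul, add_zero, zero_add]
  ext i i'
  simp only [ptrR, Matrix.of_apply, Matrix.add_apply, Matrix.smul_apply, smul_eq_mul,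
    Fintype.sum_sum_type, Matrix.submatrix_apply, he, Equiv.prodSumDistrib,
    Equiv.coe_fn_mk, Matrix.fromBlocks_apply₁₁, Matrix.fromBlocks_apply₂₂,
    Matrix.kroneckerMap_apply]
  rw [Matrix.trace]
  simp [Matrix.diag, Finset.sum_mul, Finset.mul_sum, mul_comm]
end

section
/- (Purity bound: structural requirement for perfect cooling.) Let ρ_S be a density matrix on ℂ^{d_S}, let H_M be a Hermitian d_M×d_M matrix, β ≥ 0, and let U be any unitary on ℂ^{d_S} ⊗ ℂ^{d_M}. Set ρ'_S := Tr_M[U (ρ_S ⊗ τ(β, H_M)) U†] and let ω_max := λ_max(H_M) − λ_min(H_M) be the largest energy gap of H_M. Then the smallest eigenvalue of ρ'_S satisfies λ_min(ρ'_S) ≥ e^{−β ω_max} · λ_min(ρ_S). In particular, if ρ_S has full rank, β < ∞ and ω_max < ∞, then ρ'_S has full rank, so perfect cooling to a pure state requires β → ∞ or ω_max → ∞. -/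
open scoped Kronecker ComplexOrder
open Matrix

/-- Smallest eigenvalue of a (Hermitian) matrix. -/
noncomputable def minEig {n : Type*} [Fintype n] [DecidableEq n] [Nonempty n]
    (A : Matrix n n ℂ) : ℝ :=
  ⨅ i, eigsOf A i

/-- Largest eigenvalue of a (Hermitian) matrix. -/
noncomputable def maxEig {n : Type*} [Fintype n] [DecidableEq n] [Nonempty n]
    (A : Matrix n n ℂ) : ℝ :=
  ⨆ i, eigsOf A i

/-- The partition function `Z(β,H) = Tr[e^{-βH}]` (real part; it is real for Hermitian `H`). -/
noncomputable def partitionZ {n : Type*} [Fintype n] [DecidableEq n]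
    (β : ℝ) (H : Matrix n n ℂ) : ℝ :=
  (Matrix.trace (NormedSpace.exp ((-β : ℂ) • H))).re

/-- The Gibbs state `τ(β,H) = e^{-βH} / Z(β,H)`. -/
noncomputable def gibbs {n : Type*} [Fintype n] [DecidableEq n]
    (β : ℝ) (H : Matrix n n ℂ) : Matrix n n ℂ :=
  (partitionZ β H : ℂ)⁻¹ • NormedSpace.exp ((-β : ℂ) • H)

/-!
In the Loewner order, `ρ_S ≥ λ_min(ρ_S) • 1` and `τ(β, H_M) ≥ (e^{-β ω_max} / d_M) • 1`; the
latter because `e^{-βH} ≥ e^{-β λ_max}` while `Z ≤ d_M e^{-β λ_min}`. Kronecker products of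
ordered positive matrices are ordered, unitary conjugation is monotone and fixes scalars, and
the partial trace is positive and sends `c • 1` to `d_M c • 1`. Hence
`ρ'_S ≥ e^{-β ω_max} λ_min(ρ_S) • 1`, which bounds `λ_min(ρ'_S)` and, when `ρ_S` has full rank
(so `λ_min(ρ_S) > 0`), makes `ρ'_S` positive definite.
-/

open scoped MatrixOrder

section Eigenvalues

variable {n : Type*} [Fintype n] [DecidableEq n] {A : Matrix n n ℂ}

theorem Matrix.IsHermitian.algebraMap_le_iff_le_eigenvalues (hA : A.IsHermitian) {c : ℝ} :
    algebraMap ℝ _ c ≤ A ↔ ∀ i, c ≤ hA.eigenvalues i := by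
  rw [algebraMap_le_iff_le_spectrum (ha := hA.isSelfAdjoint),
    hA.spectrum_real_eq_range_eigenvalues, Set.forall_mem_range]

theorem Matrix.IsHermitian.eigenvalues_eq_eigsOf (hA : A.IsHermitian) :
    hA.eigenvalues = eigsOf A :=
  (dif_pos hA).symm

theorem Matrix.IsHermitian.minEig_le_eigenvalues [Nonempty n] (hA : A.IsHermitian) (i : n) :
    minEig A ≤ hA.eigenvalues i :=
  hA.eigenvalues_eq_eigsOf ▸ ciInf_le (Set.finite_range _).bddBelow i

theorem Matrix.IsHermitian.eigenvalues_le_maxEig [Nonempty n] (hA : A.IsHermitian) (i : n) :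
    hA.eigenvalues i ≤ maxEig A :=
  hA.eigenvalues_eq_eigsOf ▸ le_ciSup (Set.finite_range _).bddAbove i

theorem Matrix.IsHermitian.algebraMap_minEig_le [Nonempty n] (hA : A.IsHermitian) :
    algebraMap ℝ _ (minEig A) ≤ A :=
  hA.algebraMap_le_iff_le_eigenvalues.mpr hA.minEig_le_eigenvalues

theorem le_minEig_of_algebraMap_le [Nonempty n] {c : ℝ} (h : algebraMap ℝ _ c ≤ A) :
    c ≤ minEig A := by
  have hA : A.IsHermitian := by
    simpa using
      (Matrix.le_iff.mp h).isHermitian.add ((IsSelfAdjoint.all c).algebraMap (Matrix n n ℂ))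
  unfold minEig
  rw [← hA.eigenvalues_eq_eigsOf]
  exact le_ciInf (hA.algebraMap_le_iff_le_eigenvalues.mp h)

theorem Matrix.PosSemidef.minEig_nonneg [Nonempty n] (hA : A.PosSemidef) : 0 ≤ minEig A :=
  le_minEig_of_algebraMap_le (by simpa using hA.nonneg)

theorem Matrix.PosDef.minEig_pos [Nonempty n] (hA : A.PosDef) : 0 < minEig A := by
  obtain ⟨i, hi⟩ := exists_eq_ciInf_of_finite (f := eigsOf A)
  rw [minEig, ← hi, ← hA.isHermitian.eigenvalues_eq_eigsOf]
  exact hA.eigenvalues_pos i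

theorem Matrix.PosSemidef.posDef_of_rank_eq_card (hA : A.PosSemidef) (h : A.rank = Fintype.card n) :
    A.PosDef := by
  refine hA.isHermitian.posDef_iff_eigenvalues_pos.mpr fun i => ?_
  refine (hA.eigenvalues_nonneg i).lt_of_ne' fun hi => ?_
  have := Fintype.card_subtype_lt (p := fun j => hA.isHermitian.eigenvalues j ≠ 0) (not_not.mpr hi)
  rw [← hA.isHermitian.rank_eq_card_non_zero_eigs, h] at this
  exact this.false

theorem Matrix.PosDef.of_algebraMap_le {c : ℝ} (hc : 0 < c) (h : algebraMap ℝ _ c ≤ A) :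
    A.PosDef := by
  have hc' : (algebraMap ℝ (Matrix n n ℂ) c).PosDef := by
    rw [algebraMap_eq_diagonal]
    exact posDef_diagonal_iff.mpr fun _ => by simpa using hc
  simpa using hc'.add_posSemidef (Matrix.le_iff.mp h)

end Eigenvalues

section Gibbs

variable {n : Type*} [Fintype n] [DecidableEq n] {H : Matrix n n ℂ}

-- `NormedSpace.exp` depends only on the topology; the C⋆-norm is opened just to reach `cfc` lemmas.
open scoped Matrix.Norms.L2Operator in
theorem Matrix.IsHermitian.exp_neg_smul_eq_cfc (hH : H.IsHermitian) (β : ℝ) :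
    NormedSpace.exp ((-β : ℂ) • H) = cfc (fun x => Real.exp (-β * x)) H := by
  rw [cfc_comp_const_mul (-β) Real.exp H Real.continuous_exp.continuousOn hH.isSelfAdjoint,
    CFC.real_exp_eq_normedSpace_exp ((IsSelfAdjoint.all _).smul hH.isSelfAdjoint),
    ← Complex.coe_smul, Complex.ofReal_neg]

omit [DecidableEq n] in
theorem Matrix.re_trace_le_re_trace {A B : Matrix n n ℂ} (h : A ≤ B) :
    A.trace.re ≤ B.trace.re := by
  have := (Matrix.le_iff.mp h).trace_nonneg
  rw [trace_sub, sub_nonneg] at this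
  exact (Complex.le_def.mp this).1

theorem Matrix.trace_algebraMap_real (c : ℝ) :
    (algebraMap ℝ (Matrix n n ℂ) c).trace = (Fintype.card n * c : ℝ) := by
  simp [algebraMap_eq_diagonal]

variable [Nonempty n] {β : ℝ}

theorem Matrix.IsHermitian.algebraMap_le_exp (hH : H.IsHermitian) (hβ : 0 ≤ β) :
    algebraMap ℝ _ (Real.exp (-β * maxEig H)) ≤ NormedSpace.exp ((-β : ℂ) • H) := by
  rw [hH.exp_neg_smul_eq_cfc, algebraMap_le_cfc_iff _ _ _ (by fun_prop) hH.isSelfAdjoint,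
    hH.spectrum_real_eq_range_eigenvalues, Set.forall_mem_range]
  intro i
  exact Real.exp_le_exp.mpr (by nlinarith [hH.eigenvalues_le_maxEig i])

theorem Matrix.IsHermitian.exp_le_algebraMap (hH : H.IsHermitian) (hβ : 0 ≤ β) :
    NormedSpace.exp ((-β : ℂ) • H) ≤ algebraMap ℝ _ (Real.exp (-β * minEig H)) := by
  rw [hH.exp_neg_smul_eq_cfc, cfc_le_algebraMap_iff _ _ _ (by fun_prop) hH.isSelfAdjoint,
    hH.spectrum_real_eq_range_eigenvalues, Set.forall_mem_range]
  intro i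
  exact Real.exp_le_exp.mpr (by nlinarith [hH.minEig_le_eigenvalues i])

theorem Matrix.IsHermitian.partitionZ_pos (hH : H.IsHermitian) (hβ : 0 ≤ β) :
    0 < partitionZ β H := by
  have := re_trace_le_re_trace (hH.algebraMap_le_exp hβ)
  rw [trace_algebraMap_real, Complex.ofReal_re] at this
  exact lt_of_lt_of_le (by positivity) this

theorem Matrix.IsHermitian.partitionZ_le (hH : H.IsHermitian) (hβ : 0 ≤ β) :
    partitionZ β H ≤ Fintype.card n * Real.exp (-β * minEig H) := by
  have := re_trace_le_re_trace (hH.exp_le_algebraMap hβ)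
  rwa [trace_algebraMap_real, Complex.ofReal_re] at this

theorem Matrix.IsHermitian.algebraMap_le_gibbs (hH : H.IsHermitian) (hβ : 0 ≤ β) :
    algebraMap ℝ _ (Real.exp (-β * (maxEig H - minEig H)) / Fintype.card n) ≤ gibbs β H := by
  have hZ := hH.partitionZ_pos hβ
  calc algebraMap ℝ _ (Real.exp (-β * (maxEig H - minEig H)) / Fintype.card n)
      ≤ algebraMap ℝ _ ((partitionZ β H)⁻¹ * Real.exp (-β * maxEig H)) := by
        refine algebraMap_mono _ ?_
        calc Real.exp (-β * (maxEig H - minEig H)) / Fintype.card n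
            = Real.exp (-β * maxEig H) / (Fintype.card n * Real.exp (-β * minEig H)) := by
              rw [mul_sub, Real.exp_sub, div_div, mul_comm (Real.exp _)]
          _ ≤ Real.exp (-β * maxEig H) / partitionZ β H :=
              div_le_div_of_nonneg_left (Real.exp_pos _).le hZ (hH.partitionZ_le hβ)
          _ = (partitionZ β H)⁻¹ * Real.exp (-β * maxEig H) := div_eq_inv_mul _ _
    _ = (partitionZ β H)⁻¹ • algebraMap ℝ _ (Real.exp (-β * maxEig H)) := by
        rw [Algebra.smul_def, map_mul]
    _ ≤ (partitionZ β H)⁻¹ • NormedSpace.exp ((-β : ℂ) • H) :=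
        smul_le_smul_of_nonneg_left (hH.algebraMap_le_exp hβ) (inv_nonneg.mpr hZ.le)
    _ = gibbs β H := by
        rw [gibbs, ← Complex.ofReal_inv, Complex.coe_smul]

end Gibbs

section Kronecker

variable {𝕜 m n : Type*} [RCLike 𝕜] [Fintype m] [Fintype n]

theorem Matrix.kronecker_le_kronecker {A A' : Matrix m m 𝕜} {B B' : Matrix n n 𝕜}
    (hA : 0 ≤ A) (hAA' : A ≤ A') (hB : 0 ≤ B) (hBB' : B ≤ B') : A ⊗ₖ B ≤ A' ⊗ₖ B' := by
  have hsplit : A' ⊗ₖ B' - A ⊗ₖ B = (A' - A) ⊗ₖ B' + A ⊗ₖ (B' - B) := by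
    ext ⟨i, k⟩ ⟨j, l⟩
    simp only [sub_apply, add_apply, kroneckerMap_apply]
    ring
  rw [le_iff, hsplit]
  exact ((le_iff.mp hAA').kronecker (hB.trans hBB').posSemidef).add
    (hA.posSemidef.kronecker (le_iff.mp hBB'))

theorem Matrix.algebraMap_kronecker_algebraMap [DecidableEq m] [DecidableEq n] (a b : ℝ) :
    algebraMap ℝ (Matrix m m 𝕜) a ⊗ₖ algebraMap ℝ (Matrix n n 𝕜) b
      = algebraMap ℝ _ (a * b) := by
  simp only [Algebra.algebraMap_eq_smul_one, smul_kronecker, kronecker_smul, one_kronecker_one,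
    smul_smul, mul_comm b]

end Kronecker

theorem Matrix.algebraMap_le_unitary_conj {𝕜 n : Type*} [RCLike 𝕜] [Fintype n] [DecidableEq n]
    {U σ : Matrix n n 𝕜} (hU : U ∈ unitaryGroup n 𝕜) {c : ℝ} (h : algebraMap ℝ _ c ≤ σ) :
    algebraMap ℝ _ c ≤ U * σ * Uᴴ := by
  have hconj : U * algebraMap ℝ _ c * Uᴴ = algebraMap ℝ _ c := by
    rw [← Algebra.commutes, mul_assoc, ← star_eq_conjTranspose, mem_unitaryGroup_iff.mp hU,
      mul_one]
  simpa only [hconj, star_eq_conjTranspose] using star_right_conjugate_le_conjugate h U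

section PartialTrace

variable {α β : Type*} [Fintype β]

theorem ptrR_sub (σ σ' : Matrix (α × β) (α × β) ℂ) : ptrR (σ - σ') = ptrR σ - ptrR σ' := by
  ext i i'
  simp [ptrR, Finset.sum_sub_distrib]

variable [Fintype α] [DecidableEq α] [DecidableEq β]

-- `ptrRKraus k = 1 ⊗ ⟨k|`: the Kraus operators of the partial trace.
def ptrRKraus (k : β) : Matrix α (α × β) ℂ :=
  Matrix.of fun i p => if p = (i, k) then 1 else 0

theorem ptrR_eq_sum_kraus (σ : Matrix (α × β) (α × β) ℂ) :
    ptrR σ = ∑ k, (ptrRKraus k : Matrix α (α × β) ℂ) * σ * (ptrRKraus k : Matrix α (α × β) ℂ)ᴴ := by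
  ext i i'
  simp only [ptrR, ptrRKraus, Matrix.of_apply, Matrix.sum_apply, Matrix.mul_apply,
    Matrix.conjTranspose_apply]
  refine Finset.sum_congr rfl fun k _ => ?_
  rw [Finset.sum_eq_single (i', k) (by intro b _ hb; simp [hb]) (by simp),
    Finset.sum_eq_single (i, k) (by intro b _ hb; simp [hb]) (by simp)]
  simp

theorem Matrix.PosSemidef.ptrR {σ : Matrix (α × β) (α × β) ℂ} (hσ : σ.PosSemidef) :
    (ptrR σ).PosSemidef := by
  rw [ptrR_eq_sum_kraus]
  exact Matrix.posSemidef_sum _ fun k _ => hσ.mul_mul_conjTranspose_same _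

theorem ptrR_mono {σ σ' : Matrix (α × β) (α × β) ℂ} (h : σ ≤ σ') : ptrR σ ≤ ptrR σ' := by
  rw [Matrix.le_iff, ← ptrR_sub]
  exact (Matrix.le_iff.mp h).ptrR

theorem ptrR_algebraMap (c : ℝ) :
    ptrR (algebraMap ℝ (Matrix (α × β) (α × β) ℂ) c) = algebraMap ℝ _ (Fintype.card β * c) := by
  ext i i'
  by_cases h : i = i' <;> simp [ptrR, Matrix.algebraMap_eq_diagonal, Matrix.diagonal_apply, h]

end PartialTrace

theorem purity_bound_general (dS dM : ℕ) [NeZero dS] [NeZero dM]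
    (ρS : Matrix (Fin dS) (Fin dS) ℂ) (hρS : ρS.PosSemidef)
    (HM : Matrix (Fin dM) (Fin dM) ℂ) (hHM : HM.IsHermitian)
    (β : ℝ) (hβ : 0 ≤ β)
    (U : Matrix (Fin dS × Fin dM) (Fin dS × Fin dM) ℂ)
    (hU : U ∈ Matrix.unitaryGroup (Fin dS × Fin dM) ℂ) :
    Real.exp (-β * (maxEig HM - minEig HM)) * minEig ρS
      ≤ minEig (ptrR (U * (ρS ⊗ₖ gibbs β HM) * Uᴴ)) ∧
    (ρS.rank = dS → (ptrR (U * (ρS ⊗ₖ gibbs β HM) * Uᴴ)).rank = dS) := by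
  set k := Real.exp (-β * (maxEig HM - minEig HM))
  have hτ : algebraMap ℝ _ (k / dM) ≤ gibbs β HM := by
    simpa only [Fintype.card_fin] using hHM.algebraMap_le_gibbs hβ
  have hstate : algebraMap ℝ _ (minEig ρS * (k / dM)) ≤ ρS ⊗ₖ gibbs β HM := by
    rw [← Matrix.algebraMap_kronecker_algebraMap]
    exact Matrix.kronecker_le_kronecker (algebraMap_nonneg _ hρS.minEig_nonneg)
      hρS.isHermitian.algebraMap_minEig_le (algebraMap_nonneg _ (by positivity)) hτ
  have hbound : algebraMap ℝ _ (k * minEig ρS) ≤ ptrR (U * (ρS ⊗ₖ gibbs β HM) * Uᴴ) := by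
    have hdM : (dM : ℝ) ≠ 0 := Nat.cast_ne_zero.mpr (NeZero.ne dM)
    convert ptrR_mono (Matrix.algebraMap_le_unitary_conj hU hstate) using 1
    rw [ptrR_algebraMap, Fintype.card_fin]
    field_simp
  refine ⟨le_minEig_of_algebraMap_le hbound, fun hrank => ?_⟩
  have hpos : 0 < k * minEig ρS :=
    mul_pos (Real.exp_pos _) (hρS.posDef_of_rank_eq_card (by simpa using hrank)).minEig_pos
  rw [Matrix.rank_of_isUnit _ (Matrix.PosDef.of_algebraMap_le hpos hbound).isUnit,
    Fintype.card_fin]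

/-- Purity bound: structural requirement for perfect cooling:
`λ_min(ρ'_S) ≥ e^{−β ω_max} λ_min(ρ_S)`; in particular a full-rank target remains full rank
after any unitary interaction with a thermal machine of bounded spectrum at finite `β`. -/
theorem purity_bound (dS dM : ℕ) [NeZero dS] [NeZero dM]
    (ρS : Matrix (Fin dS) (Fin dS) ℂ) (hρS : ρS.PosSemidef) (hρStr : ρS.trace = 1)
    (HM : Matrix (Fin dM) (Fin dM) ℂ) (hHM : HM.IsHermitian)
    (β : ℝ) (hβ : 0 ≤ β)
    (U : Matrix (Fin dS × Fin dM) (Fin dS × Fin dM) ℂ)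
    (hU : U ∈ Matrix.unitaryGroup (Fin dS × Fin dM) ℂ) :
    Real.exp (-β * (maxEig HM - minEig HM)) * minEig ρS
      ≤ minEig (ptrR (U * (ρS ⊗ₖ gibbs β HM) * Uᴴ)) ∧
    (ρS.rank = dS → (ptrR (U * (ρS ⊗ₖ gibbs β HM) * Uᴴ)).rank = dS) :=
  purity_bound_general dS dM ρS hρS HM hHM β hβ U hU
end
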